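/- arXiv:2204.05263 — 8 statements merged into one kernel-verified Lean document; each statement's English description precedes it below -/
import Mathlib

section
/- Positive semidefiniteness propagates along the Riccati difference equation: if Π_N = F is symmetric positive semidefinite and Π_k = A_kᵀΠ_{k+1}A_k − A_kᵀΠ_{k+1}B_k(I + B_kᵀΠ_{k+1}B_k)⁻¹B_kᵀΠ_{k+1}A_k for k = N−1, …, 0, then for every k ∈ {0,…,N−1} the matrix I + B_kᵀΠ_{k+1}B_k is positive definite, and for every k ∈ {0,…,N} the matrix Π_k is symmetric positive semidefinite (indeed Π_k = A_kᵀΠ_{k+1}^{1/2}(I + Π_{k+1}^{1/2}B_kB_kᵀΠ_{k+1}^{1/2})⁻¹Π_{k+1}^{1/2}A_k, where Π_{k+1}^{1/2} is the positive semidefinite square root). -/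
/-!
Writing `P = S * S` with `S` the positive semidefinite square root and `C = S * B`, the Riccati
map becomes `Aᵀ * S * (1 - C * (1 + Cᵀ * C)⁻¹ * Cᵀ) * S * A`, and by the Woodbury identity the
middle factor is `(1 + C * Cᵀ)⁻¹`, the inverse of a positive definite matrix. Hence one Riccati
step maps positive semidefinite matrices to positive semidefinite ones, and backward induction
from `Pm N = F` does the rest.
-/

open Matrix
open scoped MatrixOrder

namespace Matrix

variable {ι κ ν : Type*} [Fintype ι] [Fintype κ] [DecidableEq κ]

noncomputable def riccatiStep (A : Matrix ι ν ℝ) (B : Matrix ι κ ℝ) (P : Matrix ι ι ℝ) :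
    Matrix ν ν ℝ :=
  Aᵀ * P * A - Aᵀ * P * B * (1 + Bᵀ * P * B)⁻¹ * Bᵀ * P * A

lemma posDef_one_add_transpose_mul_mul {P : Matrix ι ι ℝ} (hP : P.PosSemidef)
    (B : Matrix ι κ ℝ) : (1 + Bᵀ * P * B).PosDef := by
  simpa using PosDef.one.add_posSemidef (hP.conjTranspose_mul_mul_same B)

variable [DecidableEq ι]

lemma inv_one_add_mul_transpose (C : Matrix ι κ ℝ) :
    (1 + C * Cᵀ)⁻¹ = 1 - C * (1 + Cᵀ * C)⁻¹ * Cᵀ := by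
  have hunit : IsUnit (1 + Cᵀ * C) := by
    simpa using (posDef_one_add_transpose_mul_mul PosSemidef.one C).isUnit
  simpa using add_mul_mul_inv_eq_sub 1 C 1 Cᵀ isUnit_one isUnit_one (by simpa using hunit)

lemma riccatiStep_mul_self (A : Matrix ι ν ℝ) (B : Matrix ι κ ℝ) {S : Matrix ι ι ℝ}
    (hS : S.IsSymm) :
    riccatiStep A B (S * S) = Aᵀ * S * (1 + S * B * Bᵀ * S)⁻¹ * S * A := by
  have hBSSB : Bᵀ * (S * S) * B = (S * B)ᵀ * (S * B) := by
    simp only [transpose_mul, hS.eq, Matrix.mul_assoc]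
  have hSBBS : S * B * Bᵀ * S = (S * B) * (S * B)ᵀ := by
    simp only [transpose_mul, hS.eq, Matrix.mul_assoc]
  rw [riccatiStep, hBSSB, hSBBS, inv_one_add_mul_transpose]
  simp only [transpose_mul, hS.eq, Matrix.mul_sub, Matrix.sub_mul, Matrix.mul_one,
    Matrix.mul_assoc]

lemma posSemidef_transpose_mul_inv_one_add_mul_transpose_mul [Fintype ν] (A : Matrix ι ν ℝ)
    (B : Matrix ι κ ℝ) {S : Matrix ι ι ℝ} (hS : S.IsSymm) :
    (Aᵀ * S * (1 + S * B * Bᵀ * S)⁻¹ * S * A).PosSemidef := by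
  have hR : (1 + S * B * Bᵀ * S).PosDef := by
    simpa [hS.eq, Matrix.mul_assoc] using
      posDef_one_add_transpose_mul_mul PosSemidef.one (S * B)ᵀ
  simpa [hS.eq, Matrix.mul_assoc] using hR.inv.posSemidef.conjTranspose_mul_mul_same (S * A)

lemma PosSemidef.exists_riccatiStep_eq {P : Matrix ι ι ℝ} (hP : P.PosSemidef)
    (A : Matrix ι ν ℝ) (B : Matrix ι κ ℝ) :
    ∃ S : Matrix ι ι ℝ, S.PosSemidef ∧ S * S = P ∧
      riccatiStep A B P = Aᵀ * S * (1 + S * B * Bᵀ * S)⁻¹ * S * A := by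
  have hS : (CFC.sqrt P).PosSemidef := (CFC.sqrt_nonneg P).posSemidef
  have hSS : CFC.sqrt P * CFC.sqrt P = P := CFC.sqrt_mul_sqrt_self P hP.nonneg
  refine ⟨CFC.sqrt P, hS, hSS, ?_⟩
  rw [← riccatiStep_mul_self A B (isHermitian_iff_isSymm.mp hS.1), hSS]

lemma PosSemidef.riccatiStep [Fintype ν] {P : Matrix ι ι ℝ} (hP : P.PosSemidef)
    (A : Matrix ι ν ℝ) (B : Matrix ι κ ℝ) : (riccatiStep A B P).PosSemidef := by
  obtain ⟨S, hS, -, h⟩ := hP.exists_riccatiStep_eq A B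
  rw [h]
  exact posSemidef_transpose_mul_inv_one_add_mul_transpose_mul A B
    (isHermitian_iff_isSymm.mp hS.1)

end Matrix

theorem stmt1_general {n m N : ℕ}
    (A : ℕ → Matrix (Fin n) (Fin n) ℝ) (B : ℕ → Matrix (Fin n) (Fin m) ℝ)
    (F : Matrix (Fin n) (Fin n) ℝ) (hF : F.PosSemidef)
    (Pm : ℕ → Matrix (Fin n) (Fin n) ℝ)
    (hPmN : Pm N = F)
    (hrec : ∀ k < N, Pm k = (A k)ᵀ * Pm (k+1) * A k -
      (A k)ᵀ * Pm (k+1) * B k *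
        ((1 : Matrix (Fin m) (Fin m) ℝ) + (B k)ᵀ * Pm (k+1) * B k)⁻¹ *
        (B k)ᵀ * Pm (k+1) * A k) :
    (∀ k < N, ((1 : Matrix (Fin m) (Fin m) ℝ) + (B k)ᵀ * Pm (k+1) * B k).PosDef) ∧
    (∀ k ≤ N, (Pm k).PosSemidef) ∧
    (∀ k < N, ∃ S : Matrix (Fin n) (Fin n) ℝ, S.PosSemidef ∧ S * S = Pm (k+1) ∧
      Pm k = (A k)ᵀ * S *
        ((1 : Matrix (Fin n) (Fin n) ℝ) + S * B k * (B k)ᵀ * S)⁻¹ * S * A k) := by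
  have hPsd : ∀ k ≤ N, (Pm k).PosSemidef := fun k hk =>
    Nat.decreasingInduction (motive := fun k _ => (Pm k).PosSemidef)
      (fun k hk ih => (hrec k hk).symm ▸ ih.riccatiStep (A k) (B k)) (hPmN ▸ hF) hk
  refine ⟨fun k hk => posDef_one_add_transpose_mul_mul (hPsd (k + 1) hk) (B k), hPsd,
    fun k hk => ?_⟩
  obtain ⟨S, hS, hSS, hstep⟩ := (hPsd (k + 1) hk).exists_riccatiStep_eq (A k) (B k)
  exact ⟨S, hS, hSS, (hrec k hk).trans hstep⟩

/-- Positive semidefiniteness propagates along the Riccati difference equation. -/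
theorem stmt1 {n m N : ℕ} (hn : 0 < n) (hm : 0 < m) (hN : 0 < N)
    (A : ℕ → Matrix (Fin n) (Fin n) ℝ) (B : ℕ → Matrix (Fin n) (Fin m) ℝ)
    (F : Matrix (Fin n) (Fin n) ℝ) (hF : F.PosSemidef)
    (Pm : ℕ → Matrix (Fin n) (Fin n) ℝ)
    (hPmN : Pm N = F)
    (hrec : ∀ k < N, Pm k = (A k)ᵀ * Pm (k+1) * A k -
      (A k)ᵀ * Pm (k+1) * B k *
        ((1 : Matrix (Fin m) (Fin m) ℝ) + (B k)ᵀ * Pm (k+1) * B k)⁻¹ *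
        (B k)ᵀ * Pm (k+1) * A k) :
    (∀ k < N, ((1 : Matrix (Fin m) (Fin m) ℝ) + (B k)ᵀ * Pm (k+1) * B k).PosDef) ∧
    (∀ k ≤ N, (Pm k).PosSemidef) ∧
    (∀ k < N, ∃ S : Matrix (Fin n) (Fin n) ℝ, S.PosSemidef ∧ S * S = Pm (k+1) ∧
      Pm k = (A k)ᵀ * S *
        ((1 : Matrix (Fin n) (Fin n) ℝ) + S * B k * (B k)ᵀ * S)⁻¹ * S * A k) :=
  stmt1_general A B F hF Pm hPmN hrec
end

section
/- One step of the Riccati difference equation is equivalent to a Lyapunov difference equation for the inverse: if Π = AᵀΠ'A − AᵀΠ'B(I + BᵀΠ'B)⁻¹BᵀΠ'A, then Π'⁻¹ = AΠ⁻¹Aᵀ − BBᵀ. -/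
open Matrix

/-- One step of the Riccati difference equation is equivalent to a Lyapunov difference
equation for the inverse. -/
theorem stmt2 {n m : ℕ} (hn : 0 < n) (hm : 0 < m)
    (A P P' : Matrix (Fin n) (Fin n) ℝ) (B : Matrix (Fin n) (Fin m) ℝ)
    (hA : IsUnit A.det) (hPsym : Pᵀ = P) (hP'sym : P'ᵀ = P')
    (hP : IsUnit P.det) (hP' : IsUnit P'.det)
    (hI : IsUnit ((1 : Matrix (Fin m) (Fin m) ℝ) + Bᵀ * P' * B).det)
    (hric : P = Aᵀ * P' * A - Aᵀ * P' * B * (1 + Bᵀ * P' * B)⁻¹ * Bᵀ * P' * A) :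
    P'⁻¹ = A * P⁻¹ * Aᵀ - B * Bᵀ := by
  set S : Matrix (Fin m) (Fin m) ℝ := 1 + Bᵀ * P' * B with hSdef
  set M : Matrix (Fin n) (Fin n) ℝ := P' - P' * B * S⁻¹ * Bᵀ * P' with hMdef
  have hP'inv : P' * P'⁻¹ = 1 := mul_nonsing_inv _ hP'
  have hSinv : S⁻¹ * S = 1 := nonsing_inv_mul _ hI
  have h3 : S⁻¹ * (Bᵀ * P' * B) = 1 - S⁻¹ := by
    have h4 : Bᵀ * P' * B = S - 1 := by rw [hSdef]; abel
    rw [h4, Matrix.mul_sub, hSinv, Matrix.mul_one]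
  have hkey : M * (P'⁻¹ + B * Bᵀ) = 1 := by
    have e1 : P' * B * S⁻¹ * Bᵀ * P' * P'⁻¹ = P' * B * S⁻¹ * Bᵀ := by
      rw [Matrix.mul_assoc (P' * B * S⁻¹ * Bᵀ) P' P'⁻¹, hP'inv, Matrix.mul_one]
    have e2 : P' * B * S⁻¹ * Bᵀ * P' * (B * Bᵀ) = P' * B * Bᵀ - P' * B * S⁻¹ * Bᵀ := by
      calc P' * B * S⁻¹ * Bᵀ * P' * (B * Bᵀ)
          = P' * B * (S⁻¹ * (Bᵀ * P' * B)) * Bᵀ := by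
            simp only [Matrix.mul_assoc]
        _ = P' * B * (1 - S⁻¹) * Bᵀ := by rw [h3]
        _ = P' * B * Bᵀ - P' * B * S⁻¹ * Bᵀ := by
            rw [Matrix.mul_sub, Matrix.sub_mul, Matrix.mul_one]
    rw [hMdef, Matrix.sub_mul, Matrix.mul_add, Matrix.mul_add, hP'inv, e1, e2]
    simp only [Matrix.mul_assoc]
    abel
  have hMinv : M⁻¹ = P'⁻¹ + B * Bᵀ := inv_eq_right_inv hkey
  have hMunit : IsUnit M.det := isUnit_det_of_right_inverse hkey
  have hPM : P = Aᵀ * M * A := by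
    rw [hric, hMdef, Matrix.mul_sub, Matrix.sub_mul]
    simp only [Matrix.mul_assoc]
  have hAT : IsUnit Aᵀ.det := by rwa [Matrix.det_transpose]
  have hPinv : P⁻¹ = A⁻¹ * M⁻¹ * Aᵀ⁻¹ := by
    rw [hPM, Matrix.mul_inv_rev, Matrix.mul_inv_rev]
    rw [Matrix.mul_assoc]
  have hfin : A * P⁻¹ * Aᵀ = M⁻¹ := by
    rw [hPinv]
    rw [← Matrix.mul_assoc, ← Matrix.mul_assoc, mul_nonsing_inv _ hA, Matrix.one_mul,
      Matrix.mul_assoc, nonsing_inv_mul _ hAT, Matrix.mul_one]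
  rw [hfin, hMinv]
  abel
end

section
/- The inverse of H := εΣ⁻¹ − Π satisfies a Lyapunov difference equation along the closed-loop covariance recursion: under the stated assumptions, H'⁻¹ = AH⁻¹Aᵀ + BBᵀ, where H := εΣ⁻¹ − Π and H' := εΣ'⁻¹ − Π'. -/
open Matrix

/-- The inverse of `H := ε Sg⁻¹ − Π` satisfies a Lyapunov difference equation along the
closed-loop covariance recursion. -/
theorem stmt3 {n m : ℕ} (hn : 0 < n) (hm : 0 < m) (ε : ℝ) (hε : 0 < ε)
    (A : Matrix (Fin n) (Fin n) ℝ) (B : Matrix (Fin n) (Fin m) ℝ)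
    (P P' Sg Sg2 : Matrix (Fin n) (Fin n) ℝ)
    (hA : IsUnit A.det)
    (hPsym : Pᵀ = P) (hP'sym : P'ᵀ = P')
    (hP : IsUnit P.det) (hP' : IsUnit P'.det)
    (hI : IsUnit ((1 : Matrix (Fin m) (Fin m) ℝ) + Bᵀ * P' * B).det)
    (hI' : IsUnit ((1 : Matrix (Fin n) (Fin n) ℝ) + B * Bᵀ * P').det)
    (hric : P = Aᵀ * P' * A - Aᵀ * P' * B * (1 + Bᵀ * P' * B)⁻¹ * Bᵀ * P' * A)
    (hSgsym : Sgᵀ = Sg) (hSg2sym : Sg2ᵀ = Sg2)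
    (hSg : IsUnit Sg.det) (hSg2 : IsUnit Sg2.det)
    (hSgrec : Sg2 = ((1 + B * Bᵀ * P')⁻¹ * A) * Sg * ((1 + B * Bᵀ * P')⁻¹ * A)ᵀ
        + ε • (B * (1 + Bᵀ * P' * B)⁻¹ * Bᵀ))
    (hH : IsUnit (ε • Sg⁻¹ - P).det) (hH' : IsUnit (ε • Sg2⁻¹ - P').det) :
    (ε • Sg2⁻¹ - P')⁻¹ = A * (ε • Sg⁻¹ - P)⁻¹ * Aᵀ + B * Bᵀ := by
  set M : Matrix (Fin n) (Fin n) ℝ := 1 + B * Bᵀ * P' with hMdef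
  set N : Matrix (Fin m) (Fin m) ℝ := 1 + Bᵀ * P' * B with hNdef
  have hM : IsUnit M.det := hI'
  have hN : IsUnit N.det := hI
  have hMt : IsUnit Mᵀ.det := by rwa [Matrix.det_transpose]
  have hMtval : Mᵀ = 1 + P' * (B * Bᵀ) := by
    simp [hMdef, Matrix.transpose_add, Matrix.transpose_mul, hP'sym, Matrix.mul_assoc]
  -- rectangular intertwining
  have f1 : B * N = M * B := by
    simp [hMdef, hNdef, Matrix.mul_add, Matrix.add_mul, Matrix.mul_assoc]
  have f2 : B * N⁻¹ = M⁻¹ * B := by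
    have h := congrArg (fun X : Matrix (Fin n) (Fin m) ℝ => M⁻¹ * (X * N⁻¹)) f1
    simpa [Matrix.mul_assoc, Matrix.mul_nonsing_inv _ hN,
      Matrix.nonsing_inv_mul_cancel_left _ _ hM] using h.symm
  -- symmetry commutation
  have f3 : P' * M = Mᵀ * P' := by
    rw [hMtval, hMdef]
    simp [Matrix.mul_add, Matrix.add_mul, Matrix.mul_assoc]
  have f4 : P' * M⁻¹ = Mᵀ⁻¹ * P' := by
    have h := congrArg (fun X : Matrix (Fin n) (Fin n) ℝ => Mᵀ⁻¹ * (X * M⁻¹)) f3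
    simpa [Matrix.mul_assoc, Matrix.mul_nonsing_inv _ hM,
      Matrix.nonsing_inv_mul_cancel_left _ _ hMt] using h.symm
  have f4' : Mᵀ * (P' * M⁻¹) = P' := by
    rw [f4, Matrix.mul_nonsing_inv_cancel_left _ _ hMt]
  have f5 : M * (B * Bᵀ) = B * Bᵀ * Mᵀ := by
    rw [hMtval, hMdef]
    simp [Matrix.mul_add, Matrix.add_mul, Matrix.mul_assoc]
  -- Riccati in closed-loop form
  have f6 : P = Aᵀ * (P' * M⁻¹) * A := by
    have h1 : Aᵀ * P' * B * N⁻¹ * Bᵀ * P' * A = Aᵀ * (P' * (M⁻¹ * (B * Bᵀ * P'))) * A := by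
      rw [Matrix.mul_assoc (Aᵀ * P') B N⁻¹, f2]
      simp [Matrix.mul_assoc]
    have h2 : M⁻¹ * M - M⁻¹ * (B * Bᵀ * P') = M⁻¹ := by
      have h2a : M⁻¹ * M = M⁻¹ * 1 + M⁻¹ * (B * Bᵀ * P') := by
        rw [← Matrix.mul_add, ← hMdef]
      rw [h2a, Matrix.mul_one]; abel
    have h3 := congrArg (fun X : Matrix (Fin n) (Fin n) ℝ => P' * X) h2
    simp only [Matrix.mul_sub] at h3
    rw [Matrix.nonsing_inv_mul _ hM, Matrix.mul_one] at h3
    rw [hric, h1, ← h3]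
    simp [Matrix.sub_mul, Matrix.mul_sub, Matrix.mul_assoc]
  -- covariance recursion in terms of T
  set S : Matrix (Fin n) (Fin n) ℝ := A * Sg * Aᵀ with hSdef
  set T : Matrix (Fin n) (Fin n) ℝ := S + ε • (B * Bᵀ * Mᵀ) with hTdef
  have f7 : Sg2 = M⁻¹ * T * Mᵀ⁻¹ := by
    rw [hSgrec, hTdef, hSdef]
    have hBN : B * N⁻¹ * Bᵀ = M⁻¹ * (B * Bᵀ * Mᵀ) * Mᵀ⁻¹ := by
      rw [f2]
      simp [Matrix.mul_assoc, Matrix.mul_nonsing_inv _ hMt]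
    rw [hBN, Matrix.transpose_mul, Matrix.transpose_nonsing_inv]
    simp only [Matrix.mul_add, Matrix.add_mul, Matrix.mul_smul, Matrix.smul_mul,
      Matrix.mul_assoc]
  have hT : IsUnit T.det := by
    have hTe : T = M * Sg2 * Mᵀ := by
      rw [f7]
      simp [Matrix.mul_assoc, Matrix.nonsing_inv_mul _ hMt,
        Matrix.mul_nonsing_inv_cancel_left _ _ hM]
    rw [hTe, Matrix.det_mul, Matrix.det_mul]
    exact (hM.mul hSg2).mul hMt
  have f9 : Sg2⁻¹ = Mᵀ * T⁻¹ * M := by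
    rw [f7, Matrix.mul_inv_rev, Matrix.mul_inv_rev, Matrix.nonsing_inv_nonsing_inv _ hMt,
      Matrix.nonsing_inv_nonsing_inv _ hM, Matrix.mul_assoc]
  -- S inverse
  have hAt : IsUnit Aᵀ.det := by rwa [Matrix.det_transpose]
  have hS : IsUnit S.det := by
    rw [hSdef, Matrix.det_mul, Matrix.det_mul]; exact (hA.mul hSg).mul hAt
  have hSinv : S⁻¹ = Aᵀ⁻¹ * Sg⁻¹ * A⁻¹ := by
    rw [hSdef, Matrix.mul_inv_rev, Matrix.mul_inv_rev, Matrix.mul_assoc]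
  set K : Matrix (Fin n) (Fin n) ℝ := ε • S⁻¹ - P' * M⁻¹ with hKdef
  have f11 : ε • Sg⁻¹ - P = Aᵀ * K * A := by
    rw [hKdef, f6, hSinv]
    simp only [Matrix.sub_mul, Matrix.mul_sub, Matrix.smul_mul, Matrix.mul_smul,
      Matrix.mul_assoc, Matrix.nonsing_inv_mul _ hA, Matrix.mul_one,
      Matrix.mul_nonsing_inv_cancel_left _ _ hAt]
  have hK : IsUnit K.det := by
    have hKe : K = Aᵀ⁻¹ * (ε • Sg⁻¹ - P) * A⁻¹ := by
      rw [f11]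
      simp [Matrix.mul_assoc, Matrix.mul_nonsing_inv _ hA,
        Matrix.nonsing_inv_mul_cancel_left _ _ hAt]
    rw [hKe, Matrix.det_mul, Matrix.det_mul]
    exact ((Matrix.isUnit_nonsing_inv_det _ hAt).mul hH).mul (Matrix.isUnit_nonsing_inv_det _ hA)
  have f13 : A * (ε • Sg⁻¹ - P)⁻¹ * Aᵀ = K⁻¹ := by
    rw [f11, Matrix.mul_inv_rev, Matrix.mul_inv_rev]
    simp [Matrix.mul_assoc, Matrix.nonsing_inv_mul _ hAt,
      Matrix.mul_nonsing_inv_cancel_left _ _ hA]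
  -- main identity
  have f14 : ε • M - S * K = T * (P' * M⁻¹) := by
    have hTP : T * (P' * M⁻¹) = S * (P' * M⁻¹) + ε • (B * Bᵀ * P') := by
      rw [hTdef, Matrix.add_mul, Matrix.smul_mul]
      congr 1
      rw [Matrix.mul_assoc (B * Bᵀ) Mᵀ (P' * M⁻¹), f4']
    have hSK : S * K = ε • (1 : Matrix (Fin n) (Fin n) ℝ) - S * (P' * M⁻¹) := by
      rw [hKdef, Matrix.mul_sub, Matrix.mul_smul, Matrix.mul_nonsing_inv _ hS]
    have hMsplit : ε • M = ε • (1 : Matrix (Fin n) (Fin n) ℝ) + ε • (B * Bᵀ * P') := by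
      rw [hMdef, smul_add]
    rw [hTP, hSK, hMsplit]; abel
  have f15 : ε • (M * K⁻¹) = T * (P' * (M⁻¹ * K⁻¹)) + S := by
    have h := congrArg (fun X : Matrix (Fin n) (Fin n) ℝ => X * K⁻¹) f14
    simp only [Matrix.sub_mul, Matrix.smul_mul, Matrix.mul_assoc,
      Matrix.mul_nonsing_inv _ hK, Matrix.mul_one] at h
    exact eq_add_of_sub_eq h
  have p2 : ε • (Mᵀ * (T⁻¹ * (M * K⁻¹))) = P' * K⁻¹ + Mᵀ * (T⁻¹ * S) := by
    have h1 : ε • (Mᵀ * (T⁻¹ * (M * K⁻¹))) = Mᵀ * (T⁻¹ * (ε • (M * K⁻¹))) := by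
      rw [Matrix.mul_smul, Matrix.mul_smul]
    rw [h1, f15]
    simp only [Matrix.mul_add, Matrix.nonsing_inv_mul_cancel_left _ _ hT]
    congr 1
    calc Mᵀ * (P' * (M⁻¹ * K⁻¹)) = Mᵀ * (P' * M⁻¹) * K⁻¹ := by
          simp [Matrix.mul_assoc]
      _ = P' * K⁻¹ := by rw [f4']
  have p1 : ε • (Mᵀ * (T⁻¹ * (M * (B * Bᵀ)))) = Mᵀ - Mᵀ * (T⁻¹ * S) := by
    rw [f5]
    have h1 : ε • (Mᵀ * (T⁻¹ * (B * Bᵀ * Mᵀ))) = Mᵀ * (T⁻¹ * (ε • (B * Bᵀ * Mᵀ))) := by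
      rw [Matrix.mul_smul, Matrix.mul_smul]
    have hTsub : ε • (B * Bᵀ * Mᵀ) = T - S := by rw [hTdef]; abel
    rw [h1, hTsub, Matrix.mul_sub, Matrix.nonsing_inv_mul _ hT, Matrix.mul_sub, Matrix.mul_one]
  have p3 : P' * (B * Bᵀ) = Mᵀ - 1 := by rw [hMtval]; abel
  have key : (ε • Sg2⁻¹ - P') * (K⁻¹ + B * Bᵀ) = 1 := by
    rw [f9]
    have expand : (ε • (Mᵀ * T⁻¹ * M) - P') * (K⁻¹ + B * Bᵀ)
        = ε • (Mᵀ * (T⁻¹ * (M * K⁻¹))) + ε • (Mᵀ * (T⁻¹ * (M * (B * Bᵀ)))) - P' * K⁻¹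
          - P' * (B * Bᵀ) := by
      simp only [Matrix.sub_mul, Matrix.mul_add, Matrix.smul_mul, Matrix.mul_assoc, smul_add]
      abel
    rw [expand, p1, p2, p3]
    abel
  rw [Matrix.inv_eq_right_inv key, f13]
end

section
/- The two algebraic solutions of the normalized boundary-value problem: fix a sign σ ∈ {+1,−1} and define C_σ := S₀ + (1/2)I + σ(S₀^{1/2}S_NS₀^{1/2} + (1/4)I)^{1/2}, where the superscript 1/2 denotes the positive (semi)definite square root. Assume C_σ is invertible, set Q₀ := S₀^{1/2}C_σ⁻¹S₀^{1/2}, assume S₀⁻¹ − Q₀⁻¹ is invertible and set P₀ := (S₀⁻¹ − Q₀⁻¹)⁻¹, and assume P₀ + I and Q₀ − I are invertible. Then S_N⁻¹ = (P₀ + I)⁻¹ + (Q₀ − I)⁻¹. -/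
open Matrix

/-- The two algebraic solutions of the normalized boundary-value problem. -/
theorem stmt5 {n : ℕ} (hn : 0 < n)
    (S0 SN : Matrix (Fin n) (Fin n) ℝ) (hS0 : S0.PosDef) (hSN : SN.PosDef)
    (σ : ℝ) (hσ : σ = 1 ∨ σ = -1)
    (R0 : Matrix (Fin n) (Fin n) ℝ) (hR0 : R0.PosSemidef) (hR0R0 : R0 * R0 = S0)
    (T : Matrix (Fin n) (Fin n) ℝ) (hT : T.PosSemidef)
    (hTT : T * T = R0 * SN * R0 + (1/4 : ℝ) • 1)
    (hC : IsUnit (S0 + (1/2 : ℝ) • 1 + σ • T).det)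
    (Q0 : Matrix (Fin n) (Fin n) ℝ)
    (hQ0 : Q0 = R0 * (S0 + (1/2 : ℝ) • 1 + σ • T)⁻¹ * R0)
    (hSQ : IsUnit (S0⁻¹ - Q0⁻¹).det)
    (P0 : Matrix (Fin n) (Fin n) ℝ) (hP0 : P0 = (S0⁻¹ - Q0⁻¹)⁻¹)
    (hP1 : IsUnit (P0 + 1).det) (hQ1 : IsUnit (Q0 - 1).det) :
    SN⁻¹ = (P0 + 1)⁻¹ + (Q0 - 1)⁻¹ := by
  have hσ2 : σ * σ = 1 := by rcases hσ with h | h <;> subst h <;> norm_num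
  have hσp : σ ^ 2 = 1 := by rw [sq, hσ2]
  set C : Matrix (Fin n) (Fin n) ℝ := S0 + (1/2 : ℝ) • 1 + σ • T with hCdef
  set W : Matrix (Fin n) (Fin n) ℝ := (1/2 : ℝ) • 1 - σ • T with hWdef
  set V : Matrix (Fin n) (Fin n) ℝ := (1/2 : ℝ) • 1 + σ • T with hVdef
  set M : Matrix (Fin n) (Fin n) ℝ := R0 * SN * R0 with hMdef
  -- determinant units
  have hS0det : IsUnit S0.det := isUnit_iff_ne_zero.mpr hS0.det_pos.ne'
  have hSNdet : IsUnit SN.det := isUnit_iff_ne_zero.mpr hSN.det_pos.ne'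
  have hR0det : IsUnit R0.det := by
    have h : R0.det * R0.det = S0.det := by rw [← det_mul, hR0R0]
    exact isUnit_of_mul_isUnit_left (h ▸ hS0det)
  have hMdet : IsUnit M.det := by
    rw [hMdef, det_mul, det_mul]
    exact (hR0det.mul hSNdet).mul hR0det
  have hMTT : M = T * T - (1/4 : ℝ) • 1 := by rw [hTT]; abel
  have hWV : W * V = -M := by
    rw [hMTT, hWdef, hVdef]
    simp only [Matrix.add_mul, Matrix.sub_mul, Matrix.mul_add, Matrix.mul_sub,
      Matrix.smul_mul, Matrix.mul_smul, Matrix.one_mul, Matrix.mul_one]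
    match_scalars <;> ring_nf <;> simp [hσp]
  have hVW : V * W = -M := by
    rw [hMTT, hWdef, hVdef]
    simp only [Matrix.add_mul, Matrix.sub_mul, Matrix.mul_add, Matrix.mul_sub,
      Matrix.smul_mul, Matrix.mul_smul, Matrix.one_mul, Matrix.mul_one]
    match_scalars <;> ring_nf <;> simp [hσp]
  have hWVdet : IsUnit (W.det * V.det) := by
    rw [← det_mul, hWV]
    exact (isUnit_iff_isUnit_det _).mp (((isUnit_iff_isUnit_det M).mpr hMdet).neg)
  have hWdet' : IsUnit W.det := isUnit_of_mul_isUnit_left hWVdet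
  have hVdet' : IsUnit V.det := isUnit_of_mul_isUnit_right hWVdet
  -- inverses
  have hS0inv : S0⁻¹ = R0⁻¹ * R0⁻¹ := by rw [← hR0R0, Matrix.mul_inv_rev]
  have hQ0i : Q0⁻¹ = R0⁻¹ * (C * R0⁻¹) := by
    rw [hQ0, Matrix.mul_inv_rev, Matrix.mul_inv_rev, Matrix.nonsing_inv_nonsing_inv _ hC]
  have hdiff : S0⁻¹ - Q0⁻¹ = R0⁻¹ * (1 - C) * R0⁻¹ := by
    rw [hS0inv, hQ0i]
    simp only [Matrix.mul_sub, Matrix.sub_mul, Matrix.mul_one, Matrix.one_mul,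
      Matrix.mul_assoc]
  have h1Cdet : IsUnit (1 - C).det := by
    have e : (1 : Matrix (Fin n) (Fin n) ℝ) - C = R0 * (S0⁻¹ - Q0⁻¹) * R0 := by
      rw [hdiff]
      simp only [Matrix.mul_assoc]
      rw [Matrix.mul_nonsing_inv_cancel_left _ _ hR0det,
        Matrix.nonsing_inv_mul _ hR0det, Matrix.mul_one]
    rw [e, det_mul, det_mul]
    exact (hR0det.mul hSQ).mul hR0det
  have hP0' : P0 = R0 * ((1 - C)⁻¹ * R0) := by
    rw [hP0, hdiff, Matrix.mul_inv_rev, Matrix.mul_inv_rev,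
      Matrix.nonsing_inv_nonsing_inv _ hR0det]
  -- scalar identities
  have hS1C : S0 + (1 - C) = W := by rw [hCdef, hWdef]; module
  have hCS0 : C - S0 = V := by rw [hCdef, hVdef]; module
  have hVaddW : V + W = 1 := by rw [hVdef, hWdef]; module
  have hCV : C - V = S0 := by rw [hCdef, hVdef]; module
  -- the two explicit left inverses
  set X : Matrix (Fin n) (Fin n) ℝ := R0 * (W⁻¹ * ((1 - C) * R0⁻¹)) with hXdef
  set Y : Matrix (Fin n) (Fin n) ℝ := -(R0 * (V⁻¹ * (C * R0⁻¹))) with hYdef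
  have hX : X * (P0 + 1) = 1 := by
    rw [hXdef, hP0', Matrix.mul_add, Matrix.mul_one]
    have e1 : R0 * (W⁻¹ * ((1 - C) * R0⁻¹)) * (R0 * ((1 - C)⁻¹ * R0))
        = R0 * (W⁻¹ * (S0 * R0⁻¹)) := by
      simp only [Matrix.mul_assoc]
      rw [Matrix.nonsing_inv_mul_cancel_left _ _ hR0det,
        Matrix.mul_nonsing_inv_cancel_left _ _ h1Cdet, ← hR0R0,
        Matrix.mul_assoc, Matrix.mul_nonsing_inv _ hR0det, Matrix.mul_one]
    rw [e1]
    have e2 : R0 * (W⁻¹ * (S0 * R0⁻¹)) + R0 * (W⁻¹ * ((1 - C) * R0⁻¹))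
        = R0 * (W⁻¹ * ((S0 + (1 - C)) * R0⁻¹)) := by
      simp only [Matrix.add_mul, Matrix.mul_add]
    rw [e2, hS1C, Matrix.nonsing_inv_mul_cancel_left _ _ hWdet',
      Matrix.mul_nonsing_inv _ hR0det]
  have hY : Y * (Q0 - 1) = 1 := by
    rw [hYdef, hQ0, Matrix.neg_mul, Matrix.mul_sub, Matrix.mul_one]
    have e1 : R0 * (V⁻¹ * (C * R0⁻¹)) * (R0 * C⁻¹ * R0)
        = R0 * (V⁻¹ * (S0 * R0⁻¹)) := by
      simp only [Matrix.mul_assoc]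
      rw [Matrix.nonsing_inv_mul_cancel_left _ _ hR0det,
        Matrix.mul_nonsing_inv_cancel_left _ _ hC, ← hR0R0,
        Matrix.mul_assoc, Matrix.mul_nonsing_inv _ hR0det, Matrix.mul_one]
    rw [e1]
    have e2 : -(R0 * (V⁻¹ * (S0 * R0⁻¹)) - R0 * (V⁻¹ * (C * R0⁻¹)))
        = R0 * (V⁻¹ * ((C - S0) * R0⁻¹)) := by
      simp only [Matrix.sub_mul, Matrix.mul_sub, neg_sub]
    rw [e2, hCS0, Matrix.nonsing_inv_mul_cancel_left _ _ hVdet',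
      Matrix.mul_nonsing_inv _ hR0det]
  rw [Matrix.inv_eq_left_inv hX, Matrix.inv_eq_left_inv hY]
  -- the key middle identity
  have hmidM : M * (W⁻¹ * (1 - C) - V⁻¹ * C) = S0 := by
    have c1 : M * (W⁻¹ * (1 - C)) = -(V * (1 - C)) := by
      rw [← neg_neg M, ← hVW, Matrix.neg_mul, Matrix.mul_assoc,
        Matrix.mul_nonsing_inv_cancel_left _ _ hWdet']
    have c2 : M * (V⁻¹ * C) = -(W * C) := by
      rw [← neg_neg M, ← hWV, Matrix.neg_mul, Matrix.mul_assoc,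
        Matrix.mul_nonsing_inv_cancel_left _ _ hVdet']
    rw [Matrix.mul_sub, c1, c2]
    have e : -(V * (1 - C)) - -(W * C) = (V + W) * C - V := by noncomm_ring
    rw [e, hVaddW, Matrix.one_mul, hCV]
  have hmid : W⁻¹ * (1 - C) - V⁻¹ * C = M⁻¹ * S0 := by
    rw [← hmidM, Matrix.nonsing_inv_mul_cancel_left _ _ hMdet]
  -- conclude
  have hSNinv : SN⁻¹ = R0 * (M⁻¹ * R0) := by
    rw [hMdef, Matrix.mul_inv_rev, Matrix.mul_inv_rev]
    simp only [Matrix.mul_assoc]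
    rw [Matrix.mul_nonsing_inv_cancel_left _ _ hR0det,
      Matrix.nonsing_inv_mul _ hR0det, Matrix.mul_one]
  have hfinal : X + Y = R0 * ((W⁻¹ * (1 - C) - V⁻¹ * C) * R0⁻¹) := by
    rw [hXdef, hYdef]
    simp only [Matrix.sub_mul, Matrix.mul_sub, Matrix.mul_assoc]
    abel
  rw [hfinal, hmid, hSNinv]
  rw [← hR0R0]
  simp only [Matrix.mul_assoc]
  rw [Matrix.mul_nonsing_inv _ hR0det, Matrix.mul_one]
end

section
/- Regularity of the minus-branch solution of the coupled Lyapunov equations (Proposition 3(i)): define Q_{−,0} := G_c(N,0)^{1/2}S₀^{1/2}(S₀ + (1/2)I − (S₀^{1/2}S_NS₀^{1/2} + (1/4)I)^{1/2})⁻¹S₀^{1/2}G_c(N,0)^{1/2}, let Q_{−,k} satisfy Q_{−,k+1} = A_kQ_{−,k}A_kᵀ − B_kB_kᵀ for k = 0,…,N−1, define P_{−,0} := (εΣ̄₀⁻¹ − Q_{−,0}⁻¹)⁻¹ and let P_{−,k} satisfy P_{−,k+1} = A_kP_{−,k}A_kᵀ + B_kB_kᵀ. Then P_{−,k} and Q_{−,k}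 are invertible for every k ∈ {0,…,N}, and I + B_kᵀQ_{−,k+1}⁻¹B_k is positive definite for every k ∈ {0,…,N−1}. -/
/-!
Pass to time `0`: with `Φₖ = Φ(k,0)` and `Γₖ = G_c(k,0)` the recursions give
`Qₖ = Φₖ (Q₀ - Γₖ) Φₖᵀ` and `Pₖ = Φₖ (P₀ + Γₖ) Φₖᵀ`, where `0 ⪯ Γₖ ⪯ Γ_N = G`, and the
reachability hypotheses say that for every `k` either `Γₖ ≻ 0` (`k ≥ k_r`) or `G - Γₖ ≻ 0`
(`k < k_r`).

Everything rests on one identity: if `G ≻ 0`, `K` is invertible and `G⁻¹ + K⁻¹ ≻ 0`, then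
`G + K = G (G⁻¹ + K⁻¹) K` is invertible and `G⁻¹ - (G + K)⁻¹ = G⁻¹ (G⁻¹ + K⁻¹)⁻¹ G⁻¹ ≻ 0`.
Since inversion reverses the Loewner order, the hypothesis passes from `G` to every `0 ≺ D ⪯ G`.
In the basis `L = G^{1/2} S₀^{1/2}` the initial data satisfy `G⁻¹ - Q₀⁻¹ ≅ T - ½` and
`G⁻¹ + P₀⁻¹ ≅ T + ½`, both `≻ 0` because `T² - ¼ ≅ S_N ≻ 0`. Applying the identity with
`D = Γₖ` or `D = G - Γₖ` makes `Q₀ - Γₖ` and `P₀ + Γₖ` invertible. With `b = Φ(0,k+1) Bₖ` one has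
`Bₖᵀ Q_{k+1}⁻¹ Bₖ = bᵀ (Q₀ - Γ_{k+1})⁻¹ b`; if `Γ_{k+1} ≻ 0` this is bounded below by
`-bᵀ Γ_{k+1}⁻¹ b ⪰ -1`, and if `G - Γₖ ≻ 0` the Woodbury identity turns `1 + bᵀ (Q₀ - Γ_{k+1})⁻¹ b`
into the inverse of `1 - bᵀ (Q₀ - Γₖ)⁻¹ b`, which exceeds `1 - bᵀ (G - Γₖ)⁻¹ b ⪰ 0`.
-/

open Matrix

noncomputable section

/-- `prodAux A l d = A (l+d-1) * ⋯ * A l` (the empty product for `d = 0`). -/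
def prodAux {n : ℕ} (A : ℕ → Matrix (Fin n) (Fin n) ℝ) (l : ℕ) :
    ℕ → Matrix (Fin n) (Fin n) ℝ
  | 0 => 1
  | d + 1 => A (l + d) * prodAux A l d

/-- State-transition matrix `Φ(k,l)`: `A_{k-1} ⋯ A_l` for `k > l`, `I` for `k = l`,
and `A_k⁻¹ ⋯ A_{l-1}⁻¹` for `k < l`. -/
def Phi {n : ℕ} (A : ℕ → Matrix (Fin n) (Fin n) ℝ) (k l : ℕ) :
    Matrix (Fin n) (Fin n) ℝ :=
  if l ≤ k then prodAux A l (k - l) else (prodAux A k (l - k))⁻¹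

/-- Reachability Gramian `G_r(k₁,k₀) = Σ_{k=k₀}^{k₁−1} Φ(k₁,k+1) B_k B_kᵀ Φ(k₁,k+1)ᵀ`. -/
def Gr {n m : ℕ} (A : ℕ → Matrix (Fin n) (Fin n) ℝ) (B : ℕ → Matrix (Fin n) (Fin m) ℝ)
    (k₁ k₀ : ℕ) : Matrix (Fin n) (Fin n) ℝ :=
  ∑ k ∈ Finset.Ico k₀ k₁, Phi A k₁ (k+1) * B k * (B k)ᵀ * (Phi A k₁ (k+1))ᵀ

/-- Controllability Gramian `G_c(k₁,k₀) = Σ_{k=k₀}^{k₁−1} Φ(k₀,k+1) B_k B_kᵀ Φ(k₀,k+1)ᵀ`. -/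
def Gc {n m : ℕ} (A : ℕ → Matrix (Fin n) (Fin n) ℝ) (B : ℕ → Matrix (Fin n) (Fin m) ℝ)
    (k₁ k₀ : ℕ) : Matrix (Fin n) (Fin n) ℝ :=
  ∑ k ∈ Finset.Ico k₀ k₁, Phi A k₀ (k+1) * B k * (B k)ᵀ * (Phi A k₀ (k+1))ᵀ

namespace Matrix

lemma dotProduct_transpose_mul_mul_mulVec {ι κ α : Type*} [Fintype ι] [Fintype κ]
    [CommSemiring α] (b : Matrix ι κ α) (M : Matrix ι ι α) (u : κ → α) :
    u ⬝ᵥ (bᵀ * M * b) *ᵥ u = (b *ᵥ u) ⬝ᵥ M *ᵥ (b *ᵥ u) := by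
  rw [← mulVec_mulVec, ← mulVec_mulVec, dotProduct_mulVec, vecMul_transpose]

variable {ι κ α : Type*} [Fintype ι] [DecidableEq ι]

section CommRing

variable [CommRing α]

lemma isUnit_det_neg_iff {M : Matrix ι ι α} : IsUnit (-M).det ↔ IsUnit M.det := by
  rw [det_neg, IsUnit.mul_iff, and_iff_right ((isUnit_one.neg).pow _)]

lemma inv_neg (M : Matrix ι ι α) : (-M)⁻¹ = -M⁻¹ := by
  by_cases hM : IsUnit M.det
  · exact inv_eq_left_inv (by rw [neg_mul_neg, nonsing_inv_mul _ hM])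
  · rw [nonsing_inv_apply_not_isUnit _ hM,
      nonsing_inv_apply_not_isUnit _ (isUnit_det_neg_iff.not.mpr hM), neg_zero]

lemma inv_mul_mul_transpose (L X : Matrix ι ι α) : (L * X * Lᵀ)⁻¹ = (L⁻¹)ᵀ * X⁻¹ * L⁻¹ := by
  rw [mul_inv_rev, mul_inv_rev, transpose_nonsing_inv, Matrix.mul_assoc]

lemma isUnit_det_mul_mul_transpose {L X : Matrix ι ι α} (hL : IsUnit L.det)
    (hX : IsUnit X.det) : IsUnit (L * X * Lᵀ).det := by
  rw [det_mul, det_mul, det_transpose]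
  exact (hL.mul hX).mul hL

lemma transpose_mul_inv_mul_mul_transpose_mul (L X : Matrix ι ι α) (b : Matrix ι κ α) :
    bᵀ * (L * X * Lᵀ)⁻¹ * b = (L⁻¹ * b)ᵀ * X⁻¹ * (L⁻¹ * b) := by
  rw [inv_mul_mul_transpose, transpose_mul]
  simp only [Matrix.mul_assoc]

end CommRing

lemma posDef_transpose_mul_mul_iff {L M : Matrix ι ι ℝ} (hL : IsUnit L.det) :
    (Lᵀ * M * L).PosDef ↔ M.PosDef := by
  simpa [star_eq_conjTranspose, conjTranspose_eq_transpose_of_trivial] using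
    IsUnit.posDef_star_left_conjugate_iff (x := M) ((isUnit_iff_isUnit_det L).mpr hL)

lemma PosSemidef.posDef_sub_smul_one {T : Matrix ι ι ℝ} (hT : T.PosSemidef) {c : ℝ} (hc : 0 ≤ c)
    (h : (T * T - (c * c) • 1).PosDef) : (T - c • 1).PosDef := by
  set u := hT.isHermitian.eigenvectorUnitary
  set μ := hT.isHermitian.eigenvalues
  have hconj : ∀ f : ι → ℝ, (Unitary.conjStarAlgAut ℝ _ u (diagonal f)).PosDef ↔ ∀ i, 0 < f i := by
    intro f
    rw [Unitary.conjStarAlgAut_apply,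
      IsUnit.posDef_star_right_conjugate_iff Unitary.isUnit_coe, posDef_diagonal_iff]
  have hT' : T = Unitary.conjStarAlgAut ℝ _ u (diagonal μ) := by
    simpa using hT.isHermitian.spectral_theorem
  have h1 : T - c • 1 = Unitary.conjStarAlgAut ℝ _ u (diagonal fun i => μ i - c) := by
    rw [hT', ← map_one (Unitary.conjStarAlgAut ℝ _ u), ← map_smul, ← map_sub, ← diagonal_one,
      ← diagonal_smul, diagonal_sub]
    simp
  have h2 : T * T - (c * c) • 1
      = Unitary.conjStarAlgAut ℝ _ u (diagonal fun i => μ i * μ i - c * c) := by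
    rw [hT', ← map_one (Unitary.conjStarAlgAut ℝ _ u), ← map_mul, ← map_smul, ← map_sub,
      ← diagonal_one, ← diagonal_smul, diagonal_mul_diagonal, diagonal_sub]
    simp
  rw [h2, hconj] at h
  rw [h1, hconj]
  intro i
  nlinarith [h i, hT.eigenvalues_nonneg i]

variable [Fintype κ] [DecidableEq κ]

/-- Both sides are the Schur-complement criterion for `fromBlocks A B Bᵀ D ⪰ 0`. -/
lemma posSemidef_sub_mul_inv_mul_transpose_iff {A : Matrix ι ι ℝ} {D : Matrix κ κ ℝ}
    (hA : A.PosDef) (hD : D.PosDef) (B : Matrix ι κ ℝ) :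
    (A - B * D⁻¹ * Bᵀ).PosSemidef ↔ (D - Bᵀ * A⁻¹ * B).PosSemidef := by
  have := hA.isUnit.invertible
  have := hD.isUnit.invertible
  rw [← conjTranspose_eq_transpose_of_trivial, ← PosDef.fromBlocks₂₂ A B hD,
    PosDef.fromBlocks₁₁ B D hA]

lemma PosDef.posSemidef_inv_sub_inv {D G : Matrix ι ι ℝ} (hD : D.PosDef)
    (hDG : (G - D).PosSemidef) : (D⁻¹ - G⁻¹).PosSemidef := by
  have hG : G.PosDef := by simpa using hD.add_posSemidef hDG
  have h := posSemidef_sub_mul_inv_mul_transpose_iff hG hD.inv 1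
  rwa [nonsing_inv_nonsing_inv _ hD.det_pos.ne'.isUnit, transpose_one, mul_one, one_mul,
    one_mul, mul_one, iff_true_intro hDG, true_iff] at h

lemma PosDef.posDef_inv_add_inv_of_le {D G K : Matrix ι ι ℝ} (hD : D.PosDef)
    (hDG : (G - D).PosSemidef) (h : (G⁻¹ + K⁻¹).PosDef) : (D⁻¹ + K⁻¹).PosDef := by
  convert h.add_posSemidef (hD.posSemidef_inv_sub_inv hDG) using 1
  abel

/-- `G + K = G (G⁻¹ + K⁻¹) K`, and `G⁻¹ - (G + K)⁻¹ = G⁻¹ (G⁻¹ + K⁻¹)⁻¹ G⁻¹`. -/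
lemma PosDef.isUnit_det_add_and_inv_sub_inv_add {G K : Matrix ι ι ℝ} (hG : G.PosDef)
    (hK : IsUnit K.det) (h : (G⁻¹ + K⁻¹).PosDef) :
    IsUnit (G + K).det ∧ (G⁻¹ - (G + K)⁻¹).PosDef := by
  have hGu : IsUnit G.det := hG.det_pos.ne'.isUnit
  have hEu : IsUnit (G⁻¹ + K⁻¹).det := h.det_pos.ne'.isUnit
  have hfac : G + K = G * (G⁻¹ + K⁻¹) * K := by
    rw [mul_add, add_mul, mul_nonsing_inv _ hGu, one_mul, mul_assoc G,
      nonsing_inv_mul _ hK, mul_one, add_comm]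
  have hsum : IsUnit (G + K).det := by
    rw [hfac, det_mul, det_mul]; exact (hGu.mul hEu).mul hK
  refine ⟨hsum, ?_⟩
  have hinv : (G + K)⁻¹ = K⁻¹ * (G⁻¹ + K⁻¹)⁻¹ * G⁻¹ := by
    rw [hfac, mul_inv_rev, mul_inv_rev, mul_assoc]
  have hGs : (G⁻¹)ᵀ = G⁻¹ := by
    rw [transpose_nonsing_inv, ← conjTranspose_eq_transpose_of_trivial, hG.isHermitian.eq]
  have key : G⁻¹ - (G + K)⁻¹ = (G⁻¹)ᵀ * (G⁻¹ + K⁻¹)⁻¹ * G⁻¹ := by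
    calc G⁻¹ - (G + K)⁻¹
        = (G⁻¹ + K⁻¹) * (G⁻¹ + K⁻¹)⁻¹ * G⁻¹ - K⁻¹ * (G⁻¹ + K⁻¹)⁻¹ * G⁻¹ := by
          rw [hinv, mul_nonsing_inv _ hEu, one_mul]
      _ = (G⁻¹)ᵀ * (G⁻¹ + K⁻¹)⁻¹ * G⁻¹ := by rw [hGs, add_mul, add_mul, add_sub_cancel_right]
  rw [key, posDef_transpose_mul_mul_iff (isUnit_nonsing_inv_det _ hGu)]
  exact h.inv

section InverseGap

variable {G X Γ : Matrix ι ι ℝ}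

lemma isUnit_det_sub_and_posDef_inv_add_inv_sub (hX : IsUnit X.det)
    (hgap : (G⁻¹ - X⁻¹).PosDef) (hΓ : Γ.PosDef) (hΓG : (G - Γ).PosSemidef) :
    IsUnit (X - Γ).det ∧ (Γ⁻¹ + (X - Γ)⁻¹).PosDef := by
  rw [sub_eq_add_neg, ← inv_neg] at hgap
  obtain ⟨hu, hpd⟩ := hΓ.isUnit_det_add_and_inv_sub_inv_add (isUnit_det_neg_iff.mpr hX)
    (hΓ.posDef_inv_add_inv_of_le hΓG hgap)
  rw [show Γ + -X = -(X - Γ) by abel, isUnit_det_neg_iff] at hu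
  rw [show Γ + -X = -(X - Γ) by abel, inv_neg, sub_neg_eq_add] at hpd
  exact ⟨hu, hpd⟩

lemma isUnit_det_sub_and_posDef_inv_sub_sub_inv_sub (hG : G.PosDef) (hX : IsUnit X.det)
    (hgap : (G⁻¹ - X⁻¹).PosDef) (hΓ : Γ.PosSemidef) (hGΓ : (G - Γ).PosDef) :
    IsUnit (X - Γ).det ∧ ((G - Γ)⁻¹ - (X - Γ)⁻¹).PosDef := by
  rw [sub_eq_add_neg, ← inv_neg] at hgap
  obtain ⟨hu, hpd⟩ := hG.isUnit_det_add_and_inv_sub_inv_add (isUnit_det_neg_iff.mpr hX) hgap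
  rw [show G + -X = -(X - G) by abel, isUnit_det_neg_iff] at hu
  rw [show G + -X = -(X - G) by abel, inv_neg, sub_neg_eq_add] at hpd
  have h := hGΓ.isUnit_det_add_and_inv_sub_inv_add hu
    (hGΓ.posDef_inv_add_inv_of_le (by simpa using hΓ) hpd)
  rwa [sub_add_sub_cancel'] at h

lemma isUnit_det_sub_of_posDef_inv_sub_inv (hG : G.PosDef) (hX : IsUnit X.det)
    (hgap : (G⁻¹ - X⁻¹).PosDef) (hΓ : Γ.PosSemidef) (hΓG : (G - Γ).PosSemidef)
    (hcase : Γ.PosDef ∨ (G - Γ).PosDef) : IsUnit (X - Γ).det :=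
  hcase.elim (fun h => (isUnit_det_sub_and_posDef_inv_add_inv_sub hX hgap h hΓG).1)
    (fun h => (isUnit_det_sub_and_posDef_inv_sub_sub_inv_sub hG hX hgap hΓ h).1)

end InverseGap

lemma posDef_one_add_transpose_mul_mul_s6 {V M : Matrix ι ι ℝ} {b : Matrix ι κ ℝ} (hV : V.PosDef)
    (hVb : (V - b * bᵀ).PosSemidef) (h : (V⁻¹ + M).PosDef) : (1 + bᵀ * M * b).PosDef := by
  have hP : (1 - bᵀ * V⁻¹ * b).PosSemidef := by
    simpa using (posSemidef_sub_mul_inv_mul_transpose_iff hV .one b).mp (by simpa using hVb)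
  have hsplit : 1 + bᵀ * M * b = (1 - bᵀ * V⁻¹ * b) + bᵀ * (V⁻¹ + M) * b := by
    rw [Matrix.mul_add, Matrix.add_mul]; abel
  have hherm : (bᵀ * (V⁻¹ + M) * b).IsHermitian := by
    simpa [conjTranspose_eq_transpose_of_trivial] using
      isHermitian_conjTranspose_mul_mul b h.isHermitian
  rw [hsplit]
  refine .of_dotProduct_mulVec_pos (hP.isHermitian.add hherm) fun u hu => ?_
  rw [star_trivial, add_mulVec, dotProduct_add, dotProduct_transpose_mul_mul_mulVec]
  by_cases hbu : b *ᵥ u = 0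
  · simpa [sub_mulVec, dotProduct_transpose_mul_mul_mulVec, hbu] using
      dotProduct_self_star_pos_iff.mpr hu
  · exact add_pos_of_nonneg_of_pos
      (by simpa only [star_trivial] using hP.dotProduct_mulVec_nonneg u)
      (by simpa only [star_trivial] using h.dotProduct_mulVec_pos hbu)

lemma one_add_transpose_mul_inv_sub_mul_mul_one_sub {Y : Matrix ι ι ℝ} (b : Matrix ι κ ℝ)
    (hY : IsUnit Y.det) (hYb : IsUnit (Y - b * bᵀ).det) :
    (1 + bᵀ * (Y - b * bᵀ)⁻¹ * b) * (1 - bᵀ * Y⁻¹ * b) = 1 := by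
  set Z := Y - b * bᵀ
  have hcross : bᵀ * Z⁻¹ * b * (bᵀ * Y⁻¹ * b) = bᵀ * Z⁻¹ * b - bᵀ * Y⁻¹ * b := by
    calc bᵀ * Z⁻¹ * b * (bᵀ * Y⁻¹ * b) = bᵀ * Z⁻¹ * (Y - Z) * Y⁻¹ * b := by
          simp only [Z, sub_sub_cancel, Matrix.mul_assoc]
      _ = bᵀ * Z⁻¹ * b - bᵀ * Y⁻¹ * b := by
          simp only [Matrix.mul_sub, Matrix.sub_mul, Matrix.mul_assoc,
            mul_nonsing_inv_cancel_left _ _ hY, nonsing_inv_mul_cancel_left _ _ hYb]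
  rw [Matrix.add_mul, Matrix.mul_sub, Matrix.mul_sub, Matrix.one_mul, Matrix.mul_one,
    Matrix.one_mul, hcross]
  abel

lemma posDef_one_add_transpose_mul_inv_sub_mul {V Y : Matrix ι ι ℝ} {b : Matrix ι κ ℝ}
    (hY : IsUnit Y.det) (hYb : IsUnit (Y - b * bᵀ).det) (hV : V.PosDef)
    (hVb : (V - b * bᵀ).PosSemidef) (h : (V⁻¹ - Y⁻¹).PosDef) :
    (1 + bᵀ * (Y - b * bᵀ)⁻¹ * b).PosDef := by
  have hpos := posDef_one_add_transpose_mul_mul_s6 hV hVb (M := -Y⁻¹) (by rwa [← sub_eq_add_neg])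
  rw [Matrix.mul_neg, Matrix.neg_mul, ← sub_eq_add_neg] at hpos
  rw [← inv_eq_left_inv (one_add_transpose_mul_inv_sub_mul_mul_one_sub b hY hYb)]
  exact hpos.inv

lemma posDef_one_add_transpose_mul_inv_sub_add_mul {G X Γ : Matrix ι ι ℝ} {b : Matrix ι κ ℝ}
    (hG : G.PosDef) (hX : IsUnit X.det) (hgap : (G⁻¹ - X⁻¹).PosDef) (hΓ : Γ.PosSemidef)
    (hle : (G - (Γ + b * bᵀ)).PosSemidef) (hXΓ : IsUnit (X - (Γ + b * bᵀ)).det)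
    (hcase : (Γ + b * bᵀ).PosDef ∨ (G - Γ).PosDef) :
    (1 + bᵀ * (X - (Γ + b * bᵀ))⁻¹ * b).PosDef := by
  rcases hcase with hΓb | hGΓ
  · exact posDef_one_add_transpose_mul_mul_s6 hΓb (by simpa using hΓ)
      (isUnit_det_sub_and_posDef_inv_add_inv_sub hX hgap hΓb hle).2
  · obtain ⟨hu, hpd⟩ := isUnit_det_sub_and_posDef_inv_sub_sub_inv_sub hG hX hgap hΓ hGΓ
    rw [← sub_sub] at hle hXΓ ⊢
    exact posDef_one_add_transpose_mul_inv_sub_mul hu hXΓ hGΓ hle hpd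

end Matrix

section Transition

variable {n m : ℕ} (A : ℕ → Matrix (Fin n) (Fin n) ℝ) (B : ℕ → Matrix (Fin n) (Fin m) ℝ)

lemma Phi_zero_right (k : ℕ) : Phi A k 0 = prodAux A 0 k := by
  simp [Phi]

lemma Phi_succ_zero (k : ℕ) : Phi A (k + 1) 0 = A k * Phi A k 0 := by
  simp [Phi_zero_right, prodAux]

lemma Phi_zero_left (l : ℕ) : Phi A 0 l = (Phi A l 0)⁻¹ := by
  rcases l.eq_zero_or_pos with rfl | hl
  · simp [Phi, prodAux]
  · rw [Phi, if_neg (by omega), Phi_zero_right, Nat.sub_zero]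

lemma Phi_mul_Phi_zero {j k : ℕ} (h : j ≤ k) : Phi A k j * Phi A j 0 = Phi A k 0 := by
  obtain ⟨d, rfl⟩ := Nat.exists_eq_add_of_le h
  rw [Phi, if_pos h, Nat.add_sub_cancel_left, Phi_zero_right, Phi_zero_right]
  clear h
  induction d with
  | zero => simp [prodAux]
  | succ d ih =>
    show A (j + d) * prodAux A j d * prodAux A 0 j = A (0 + (j + d)) * prodAux A 0 (j + d)
    rw [Matrix.mul_assoc, ih, Nat.zero_add]

variable {A} {N : ℕ}

lemma isUnit_det_Phi_zero (hA : ∀ k < N, IsUnit (A k).det) {k : ℕ} (hk : k ≤ N) :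
    IsUnit (Phi A k 0).det := by
  induction k with
  | zero => simp [Phi_zero_right, prodAux]
  | succ k ih => rw [Phi_succ_zero, det_mul]; exact (hA k hk).mul (ih (by omega))

lemma Phi_eq_mul_Phi_zero_left (hA : ∀ k < N, IsUnit (A k).det) {j k : ℕ} (h : j ≤ k)
    (hk : k ≤ N) : Phi A k j = Phi A k 0 * Phi A 0 j := by
  rw [← Phi_mul_Phi_zero A h, Phi_zero_left, Matrix.mul_nonsing_inv_cancel_right _ _
    (isUnit_det_Phi_zero hA (h.trans hk))]

variable {j k : ℕ}

lemma Gc_zero_zero : Gc A B 0 0 = 0 := by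
  simp [Gc]

lemma Gc_sub_Gc (h : j ≤ k) : Gc A B k 0 - Gc A B j 0
    = ∑ i ∈ Finset.Ico j k, (Phi A 0 (i + 1) * B i) * (Phi A 0 (i + 1) * B i)ᵀ := by
  rw [Gc, Gc, ← Finset.sum_Ico_consecutive _ (Nat.zero_le j) h, add_sub_cancel_left]
  simp only [transpose_mul, Matrix.mul_assoc]

lemma Gc_succ (k : ℕ) :
    Gc A B (k + 1) 0 = Gc A B k 0 + (Phi A 0 (k + 1) * B k) * (Phi A 0 (k + 1) * B k)ᵀ := by
  rw [← sub_eq_iff_eq_add', Gc_sub_Gc B k.le_succ, Nat.Ico_succ_singleton, Finset.sum_singleton]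

lemma posSemidef_Gc_sub_Gc (h : j ≤ k) : (Gc A B k 0 - Gc A B j 0).PosSemidef := by
  rw [Gc_sub_Gc B h]
  refine Finset.sum_induction _ PosSemidef (fun _ _ => PosSemidef.add) .zero fun i _ => ?_
  simpa [conjTranspose_eq_transpose_of_trivial] using
    posSemidef_self_mul_conjTranspose (Phi A 0 (i + 1) * B i)

lemma posSemidef_Gc (k : ℕ) : (Gc A B k 0).PosSemidef := by
  simpa [Gc_zero_zero] using posSemidef_Gc_sub_Gc B (Nat.zero_le k)

variable {B}

lemma Gr_eq_Phi_mul_Gc_sub_Gc_mul (hA : ∀ k < N, IsUnit (A k).det) (h : j ≤ k) (hk : k ≤ N) :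
    Gr A B k j = Phi A k 0 * (Gc A B k 0 - Gc A B j 0) * (Phi A k 0)ᵀ := by
  rw [Gc_sub_Gc B h, Gr, Finset.mul_sum, Finset.sum_mul]
  refine Finset.sum_congr rfl fun i hi => ?_
  rw [Phi_eq_mul_Phi_zero_left hA (Finset.mem_Ico.mp hi).2 hk]
  simp only [transpose_mul, Matrix.mul_assoc]

lemma posDef_Gc_sub_Gc_of_isUnit_det_Gr (hA : ∀ k < N, IsUnit (A k).det) (h : j ≤ k)
    (hk : k ≤ N) (hGr : IsUnit (Gr A B k j).det) : (Gc A B k 0 - Gc A B j 0).PosDef := by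
  rw [Gr_eq_Phi_mul_Gc_sub_Gc_mul hA h hk, det_mul, det_mul] at hGr
  exact (posSemidef_Gc_sub_Gc B h).posDef_iff_isUnit.mpr
    ((isUnit_iff_isUnit_det _).mpr (isUnit_of_mul_isUnit_right (isUnit_of_mul_isUnit_left hGr)))

lemma eq_Phi_mul_add_Gc_mul (hA : ∀ k < N, IsUnit (A k).det) {Y : ℕ → Matrix (Fin n) (Fin n) ℝ}
    (hY : ∀ k < N, Y (k + 1) = A k * Y k * (A k)ᵀ + B k * (B k)ᵀ) (hk : k ≤ N) :
    Y k = Phi A k 0 * (Y 0 + Gc A B k 0) * (Phi A k 0)ᵀ := by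
  induction k with
  | zero => simp [Gc_zero_zero, Phi_zero_right, prodAux]
  | succ k ih =>
    have hB : Phi A (k + 1) 0 * (Phi A 0 (k + 1) * B k) = B k := by
      rw [Phi_zero_left, mul_nonsing_inv_cancel_left _ _ (isUnit_det_Phi_zero hA hk)]
    have hBB : B k * (B k)ᵀ = Phi A (k + 1) 0
        * ((Phi A 0 (k + 1) * B k) * (Phi A 0 (k + 1) * B k)ᵀ) * (Phi A (k + 1) 0)ᵀ := by
      conv_lhs => rw [← hB]
      simp only [transpose_mul, Matrix.mul_assoc]
    rw [hY k hk, ih (by omega), Gc_succ, hBB, Phi_succ_zero]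
    simp only [transpose_mul, Matrix.mul_add, Matrix.add_mul, Matrix.mul_assoc, add_assoc]

end Transition

section InitialData

variable {ι : Type*} [Fintype ι] [DecidableEq ι]

lemma posDef_smul_inv_mul_mul_mul_transpose_mul_inv {ε : ℝ} (hε : 0 < ε)
    {R C W : Matrix ι ι ℝ} (hR : R.PosDef) (hC : IsUnit C.det) (hW : W.PosDef) :
    (ε⁻¹ • (R⁻¹ * C * W * Cᵀ * R⁻¹)).PosDef := by
  have hRu : IsUnit R.det := hR.det_pos.ne'.isUnit
  have hRs : (R⁻¹)ᵀ = R⁻¹ := by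
    rw [transpose_nonsing_inv, (isHermitian_iff_isSymm.mp hR.isHermitian).eq]
  have hL : IsUnit (Cᵀ * R⁻¹).det := by
    rw [det_mul, det_transpose]
    exact hC.mul (isUnit_nonsing_inv_det _ hRu)
  have h := (posDef_transpose_mul_mul_iff hL).mpr hW
  rw [transpose_mul, transpose_transpose, hRs] at h
  simpa only [Matrix.mul_assoc] using h.smul (inv_pos.mpr hε)

lemma posDef_sub_half_of_mul_self_eq {U S T : Matrix ι ι ℝ} (hU : U.PosSemidef)
    (hUu : IsUnit U.det) (hS : S.PosDef) (hT : T.PosSemidef)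
    (hTT : T * T = U * S * U + (1 / 4 : ℝ) • 1) : (T - (1 / 2 : ℝ) • 1).PosDef := by
  refine hT.posDef_sub_smul_one (by norm_num) ?_
  rw [show (1 / 2 * (1 / 2) : ℝ) = 1 / 4 by norm_num, hTT, add_sub_cancel_right]
  simpa [(isHermitian_iff_isSymm.mp hU.isHermitian).eq] using
    (posDef_transpose_mul_mul_iff hUu).mpr hS

/-- With `L = R U` and `F = S₀ + ½ - T` one has `R R = L S₀⁻¹ Lᵀ`, `Q₀ = L F⁻¹ Lᵀ` and
`Σ₀ = ε L Lᵀ`, so the two gaps are congruent to `S₀ - F = T - ½` and `S₀ + 1 - F = T + ½`. -/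
lemma inv_gaps_of_initial_data {ε : ℝ} (hε : ε ≠ 0) {G R U T S0 Sig0 Q0 P0 : Matrix ι ι ℝ}
    (hR : R.PosDef) (hRR : R * R = G) (hSig0 : IsUnit Sig0.det)
    (hS0 : S0 = ε⁻¹ • (R⁻¹ * Sig0 * R⁻¹)) (hU : U.PosSemidef) (hUu : IsUnit U.det)
    (hUU : U * U = S0) (hT : T.PosSemidef) (hT2 : (T - (1 / 2 : ℝ) • 1).PosDef)
    (hF : IsUnit (S0 + (1 / 2 : ℝ) • 1 - T).det) (hB : IsUnit (-S0 + (1 / 2 : ℝ) • 1 + T).det)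
    (hQ0 : Q0 = R * U * (S0 + (1 / 2 : ℝ) • 1 - T)⁻¹ * U * R)
    (hP0 : P0 = (ε • Sig0⁻¹ - Q0⁻¹)⁻¹) :
    IsUnit Q0.det ∧ (G⁻¹ - Q0⁻¹).PosDef ∧ IsUnit P0.det ∧ (G⁻¹ + P0⁻¹).PosDef := by
  set F := S0 + (1 / 2 : ℝ) • 1 - T
  have hRu : IsUnit R.det := hR.det_pos.ne'.isUnit
  have hRs : Rᵀ = R := (isHermitian_iff_isSymm.mp hR.isHermitian).eq
  have hS0u : IsUnit S0.det := by rw [← hUU, det_mul]; exact hUu.mul hUu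
  set L := R * U
  have hLu : IsUnit L.det := by rw [det_mul]; exact hRu.mul hUu
  have hLt : Lᵀ = U * R := by
    rw [transpose_mul, hRs, (isHermitian_iff_isSymm.mp hU.isHermitian).eq]
  have hG : G = L * S0⁻¹ * Lᵀ := by
    rw [← hRR, hLt, ← hUU, Matrix.mul_inv_rev]
    simp only [L, Matrix.mul_assoc, mul_nonsing_inv_cancel_left _ _ hUu,
      nonsing_inv_mul_cancel_left _ _ hUu]
  have hQ : Q0 = L * F⁻¹ * Lᵀ := by
    rw [hQ0, hLt]; simp only [L, Matrix.mul_assoc]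
  have hSig : ε • Sig0⁻¹ = (L * 1 * Lᵀ)⁻¹ := by
    have hLL : L * 1 * Lᵀ = ε⁻¹ • Sig0 := by
      rw [Matrix.mul_one, hLt, show R * U * (U * R) = R * (U * U) * R by
        simp only [Matrix.mul_assoc], hUU, hS0, Matrix.mul_smul, Matrix.smul_mul]
      simp only [Matrix.mul_assoc, mul_nonsing_inv_cancel_left _ _ hRu, nonsing_inv_mul _ hRu,
        Matrix.mul_one]
    rw [hLL]
    refine (inv_eq_left_inv ?_).symm
    rw [smul_mul_smul_comm, mul_inv_cancel₀ hε, nonsing_inv_mul _ hSig0, one_smul]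
  have hLi : IsUnit (L⁻¹).det := isUnit_nonsing_inv_det _ hLu
  have hGinv : G⁻¹ = (L⁻¹)ᵀ * S0 * L⁻¹ := by
    rw [hG, inv_mul_mul_transpose, nonsing_inv_nonsing_inv _ hS0u]
  have hQinv : Q0⁻¹ = (L⁻¹)ᵀ * F * L⁻¹ := by
    rw [hQ, inv_mul_mul_transpose, nonsing_inv_nonsing_inv _ hF]
  have hPinv : ε • Sig0⁻¹ - Q0⁻¹ = (L⁻¹)ᵀ * (-S0 + (1 / 2 : ℝ) • 1 + T) * L⁻¹ := by
    rw [hSig, inv_mul_mul_transpose, inv_one, hQinv, ← Matrix.sub_mul, ← Matrix.mul_sub]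
    congr 2
    simp only [F]
    module
  have hPu : IsUnit (ε • Sig0⁻¹ - Q0⁻¹).det := by
    rw [hPinv, det_mul, det_mul, det_transpose]
    exact (hLi.mul hB).mul hLi
  refine ⟨?_, ?_, ?_, ?_⟩
  · rw [hQ]
    exact isUnit_det_mul_mul_transpose hLu (isUnit_nonsing_inv_det _ hF)
  · rw [hGinv, hQinv, ← Matrix.sub_mul, ← Matrix.mul_sub, posDef_transpose_mul_mul_iff hLi]
    convert hT2 using 1
    simp only [F]
    abel
  · rw [hP0]
    exact isUnit_nonsing_inv_det _ hPu
  · rw [hP0, nonsing_inv_nonsing_inv _ hPu, hPinv, hGinv,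
      ← Matrix.add_mul, ← Matrix.mul_add, posDef_transpose_mul_mul_iff hLi]
    convert (PosDef.one.smul (by norm_num : (0 : ℝ) < 1 / 2)).add_posSemidef hT using 1
    abel

end InitialData

theorem isUnit_det_and_posDef_one_add_of_inv_gaps {n m N kr : ℕ}
    {A : ℕ → Matrix (Fin n) (Fin n) ℝ} {B : ℕ → Matrix (Fin n) (Fin m) ℝ}
    (hA : ∀ k < N, IsUnit (A k).det) (hGr1 : ∀ k, kr ≤ k → k ≤ N → IsUnit (Gr A B k 0).det)
    (hGr2 : ∀ k < kr, IsUnit (Gr A B N k).det) (hG : (Gc A B N 0).PosDef)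
    {Q P : ℕ → Matrix (Fin n) (Fin n) ℝ} (hQ0u : IsUnit (Q 0).det)
    (hQgap : ((Gc A B N 0)⁻¹ - (Q 0)⁻¹).PosDef) (hP0u : IsUnit (P 0).det)
    (hPgap : ((Gc A B N 0)⁻¹ + (P 0)⁻¹).PosDef)
    (hQrec : ∀ k < N, Q (k + 1) = A k * Q k * (A k)ᵀ - B k * (B k)ᵀ)
    (hPrec : ∀ k < N, P (k + 1) = A k * P k * (A k)ᵀ + B k * (B k)ᵀ) :
    (∀ k ≤ N, IsUnit (P k).det ∧ IsUnit (Q k).det) ∧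
      ∀ k < N, (1 + (B k)ᵀ * (Q (k + 1))⁻¹ * B k).PosDef := by
  have hΦ : ∀ k ≤ N, IsUnit (Phi A k 0).det := fun k hk => isUnit_det_Phi_zero hA hk
  have hback : ∀ k, kr ≤ k → k ≤ N → (Gc A B k 0).PosDef := fun k hkr hk => by
    simpa [Gc_zero_zero] using
      posDef_Gc_sub_Gc_of_isUnit_det_Gr hA (Nat.zero_le k) hk (hGr1 k hkr hk)
  have hfwd : ∀ k < kr, k ≤ N → (Gc A B N 0 - Gc A B k 0).PosDef := fun k hkr hk =>
    posDef_Gc_sub_Gc_of_isUnit_det_Gr hA hk le_rfl (hGr2 k hkr)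
  have hinv : ∀ {X}, IsUnit X.det → ((Gc A B N 0)⁻¹ - X⁻¹).PosDef →
      ∀ k ≤ N, IsUnit (X - Gc A B k 0).det := fun hX hgap k hk =>
    isUnit_det_sub_of_posDef_inv_sub_inv hG hX hgap (posSemidef_Gc B k)
      (posSemidef_Gc_sub_Gc B hk) ((le_or_gt kr k).imp (hback k · hk) (hfwd k · hk))
  have hQ : ∀ k ≤ N, Q k = Phi A k 0 * (Q 0 - Gc A B k 0) * (Phi A k 0)ᵀ := fun k hk => by
    have h := eq_Phi_mul_add_Gc_mul (B := B) hA (Y := fun k => -Q k)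
      (fun k hk => by simp only [hQrec k hk, Matrix.mul_neg, Matrix.neg_mul]; abel) hk
    rwa [neg_add_eq_sub, ← neg_sub, Matrix.mul_neg, Matrix.neg_mul, neg_inj] at h
  refine ⟨fun k hk => ⟨?_, ?_⟩, fun k hk => ?_⟩
  · have h := hinv (X := -P 0) (isUnit_det_neg_iff.mpr hP0u)
      (by rwa [Matrix.inv_neg, sub_neg_eq_add]) k hk
    rw [← neg_add', isUnit_det_neg_iff] at h
    rw [eq_Phi_mul_add_Gc_mul hA hPrec hk]
    exact isUnit_det_mul_mul_transpose (hΦ k hk) h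
  · rw [hQ k hk]
    exact isUnit_det_mul_mul_transpose (hΦ k hk) (hinv hQ0u hQgap k hk)
  · rw [hQ (k + 1) hk, transpose_mul_inv_mul_mul_transpose_mul, ← Phi_zero_left, Gc_succ]
    refine posDef_one_add_transpose_mul_inv_sub_add_mul hG hQ0u hQgap (posSemidef_Gc B k) ?_ ?_
      ((le_or_gt kr (k + 1)).imp (fun h => ?_) (fun h => hfwd k (by omega) (by omega)))
    · rw [← Gc_succ]; exact posSemidef_Gc_sub_Gc B hk
    · rw [← Gc_succ]; exact hinv hQ0u hQgap (k + 1) hk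
    · rw [← Gc_succ]; exact hback (k + 1) h hk

theorem stmt6_general
    {n m N : ℕ}
    (ε : ℝ) (hε : 0 < ε)
    (A : ℕ → Matrix (Fin n) (Fin n) ℝ) (B : ℕ → Matrix (Fin n) (Fin m) ℝ)
    (hA : ∀ k < N, IsUnit (A k).det)
    (Sig0 SigN : Matrix (Fin n) (Fin n) ℝ)
    (hSig0 : Sig0.PosDef) (hSigN : SigN.PosDef)
    (kr : ℕ)
    (hGr1 : ∀ k, kr ≤ k → k ≤ N → IsUnit (Gr A B k 0).det)
    (hGr2 : ∀ k < kr, IsUnit (Gr A B N k).det)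
    -- `R` is the positive definite square root of the controllability Gramian `G_c(N,0)`.
    (R : Matrix (Fin n) (Fin n) ℝ) (hR : R.PosDef) (hRR : R * R = Gc A B N 0)
    (S0 SN : Matrix (Fin n) (Fin n) ℝ)
    (hS0 : S0 = ε⁻¹ • (R⁻¹ * Sig0 * R⁻¹))
    (hSN : SN = ε⁻¹ • (R⁻¹ * Phi A 0 N * SigN * (Phi A 0 N)ᵀ * R⁻¹))
    -- `U` is the positive semidefinite square root of `S₀`.
    (U : Matrix (Fin n) (Fin n) ℝ) (hU : U.PosSemidef) (hUU : U * U = S0)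
    -- `T` is the positive semidefinite square root of `S₀^{1/2} S_N S₀^{1/2} + (1/4) I`.
    (T : Matrix (Fin n) (Fin n) ℝ) (hT : T.PosSemidef)
    (hTT : T * T = U * SN * U + (1/4 : ℝ) • 1)
    -- invertibility of `F(S₀,S_N)` and `B(S₀,S_N)`
    (hF : IsUnit (S0 + (1/2 : ℝ) • 1 - T).det)
    (hB : IsUnit (-S0 + (1/2 : ℝ) • 1 + T).det)
    (Q : ℕ → Matrix (Fin n) (Fin n) ℝ)
    (hQ0 : Q 0 = R * U * (S0 + (1/2 : ℝ) • 1 - T)⁻¹ * U * R)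
    (hQrec : ∀ k < N, Q (k+1) = A k * Q k * (A k)ᵀ - B k * (B k)ᵀ)
    (P : ℕ → Matrix (Fin n) (Fin n) ℝ)
    (hP0 : P 0 = (ε • Sig0⁻¹ - (Q 0)⁻¹)⁻¹)
    (hPrec : ∀ k < N, P (k+1) = A k * P k * (A k)ᵀ + B k * (B k)ᵀ) :
    (∀ k ≤ N, IsUnit (P k).det ∧ IsUnit (Q k).det) ∧
    (∀ k < N,
      ((1 : Matrix (Fin m) (Fin m) ℝ) + (B k)ᵀ * (Q (k+1))⁻¹ * B k).PosDef) := by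
  have hS0pd : S0.PosDef := by
    have h := posDef_smul_inv_mul_mul_mul_transpose_mul_inv hε hR (C := 1) (by simp) hSig0
    rwa [Matrix.mul_one, transpose_one, Matrix.mul_one, ← hS0] at h
  have hSNpd : SN.PosDef := hSN ▸ posDef_smul_inv_mul_mul_mul_transpose_mul_inv hε hR
    (by rw [Phi_zero_left]; exact isUnit_nonsing_inv_det _ (isUnit_det_Phi_zero hA le_rfl))
    hSigN
  have hUu : IsUnit U.det :=
    isUnit_of_mul_isUnit_left (by rw [← det_mul, hUU]; exact hS0pd.det_pos.ne'.isUnit)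
  obtain ⟨hQ0u, hQgap, hP0u, hPgap⟩ := inv_gaps_of_initial_data hε.ne' hR hRR
    hSig0.det_pos.ne'.isUnit hS0 hU hUu hUU hT
    (posDef_sub_half_of_mul_self_eq hU hUu hSNpd hT hTT) hF hB hQ0 hP0
  have hG : (Gc A B N 0).PosDef := by
    rw [← hRR]
    simpa [(isHermitian_iff_isSymm.mp hR.isHermitian).eq] using
      (posDef_transpose_mul_mul_iff hR.det_pos.ne'.isUnit).mpr PosDef.one
  exact isUnit_det_and_posDef_one_add_of_inv_gaps hA hGr1 hGr2 hG hQ0u hQgap hP0u hPgap hQrec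
    hPrec

/-- Regularity of the minus-branch solution of the coupled Lyapunov equations. -/
theorem stmt6
    {n m N : ℕ} (hn : 0 < n) (hm : 0 < m) (hN : 0 < N)
    (ε : ℝ) (hε : 0 < ε)
    (A : ℕ → Matrix (Fin n) (Fin n) ℝ) (B : ℕ → Matrix (Fin n) (Fin m) ℝ)
    (hA : ∀ k < N, IsUnit (A k).det)
    (Sig0 SigN : Matrix (Fin n) (Fin n) ℝ)
    (hSig0 : Sig0.PosDef) (hSigN : SigN.PosDef)
    (kr : ℕ) (hkr1 : 1 ≤ kr) (hkrN : kr ≤ N)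
    (hGr1 : ∀ k, kr ≤ k → k ≤ N → IsUnit (Gr A B k 0).det)
    (hGr2 : ∀ k < kr, IsUnit (Gr A B N k).det)
    -- `R` is the positive definite square root of the controllability Gramian `G_c(N,0)`.
    (R : Matrix (Fin n) (Fin n) ℝ) (hR : R.PosDef) (hRR : R * R = Gc A B N 0)
    (S0 SN : Matrix (Fin n) (Fin n) ℝ)
    (hS0 : S0 = ε⁻¹ • (R⁻¹ * Sig0 * R⁻¹))
    (hSN : SN = ε⁻¹ • (R⁻¹ * Phi A 0 N * SigN * (Phi A 0 N)ᵀ * R⁻¹))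
    -- `U` is the positive semidefinite square root of `S₀`.
    (U : Matrix (Fin n) (Fin n) ℝ) (hU : U.PosSemidef) (hUU : U * U = S0)
    -- `T` is the positive semidefinite square root of `S₀^{1/2} S_N S₀^{1/2} + (1/4) I`.
    (T : Matrix (Fin n) (Fin n) ℝ) (hT : T.PosSemidef)
    (hTT : T * T = U * SN * U + (1/4 : ℝ) • 1)
    -- invertibility of `F(S₀,S_N)` and `B(S₀,S_N)`
    (hF : IsUnit (S0 + (1/2 : ℝ) • 1 - T).det)
    (hB : IsUnit (-S0 + (1/2 : ℝ) • 1 + T).det)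
    (Q : ℕ → Matrix (Fin n) (Fin n) ℝ)
    (hQ0 : Q 0 = R * U * (S0 + (1/2 : ℝ) • 1 - T)⁻¹ * U * R)
    (hQrec : ∀ k < N, Q (k+1) = A k * Q k * (A k)ᵀ - B k * (B k)ᵀ)
    (P : ℕ → Matrix (Fin n) (Fin n) ℝ)
    (hP0 : P 0 = (ε • Sig0⁻¹ - (Q 0)⁻¹)⁻¹)
    (hPrec : ∀ k < N, P (k+1) = A k * P k * (A k)ᵀ + B k * (B k)ᵀ) :
    (∀ k ≤ N, IsUnit (P k).det ∧ IsUnit (Q k).det) ∧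
    (∀ k < N,
      ((1 : Matrix (Fin m) (Fin m) ℝ) + (B k)ᵀ * (Q (k+1))⁻¹ * B k).PosDef) :=
  stmt6_general ε hε A B hA Sig0 SigN hSig0 hSigN kr hGr1 hGr2 R hR hRR S0 SN hS0 hSN U hU hUU T hT
    hTT hF hB Q hQ0 hQrec P hP0 hPrec

end
end

section
/- The minus-branch solution of the coupled Lyapunov equations satisfies both boundary conditions (Proposition 3): define Q_{−,0} := G_c(N,0)^{1/2}S₀^{1/2}(S₀ + (1/2)I − (S₀^{1/2}S_NS₀^{1/2} + (1/4)I)^{1/2})⁻¹S₀^{1/2}G_c(N,0)^{1/2}, let Q_{−,k} satisfy Q_{−,k+1} = A_kQ_{−,k}A_kᵀ − B_kB_kᵀ for k = 0,…,N−1, define P_{−,0} := (εΣ̄₀⁻¹ − Q_{−,0}⁻¹)⁻¹ and let P_{−,k} satisfy P_{−,k+1} = A_kP_{−,k}A_kᵀ + B_kB_kᵀ. Then εΣ̄₀⁻¹ = P_{−,0}⁻¹ + Q_{−,0}⁻¹ and εΣ̄_N⁻¹ = P_{−,N}⁻¹ + Q_{−,N}⁻¹. -/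
open Matrix

noncomputable section

lemma prodAux_succ {n : ℕ} (A : ℕ → Matrix (Fin n) (Fin n) ℝ) (d : ℕ) :
    prodAux A 0 (d+1) = A d * prodAux A 0 d := by
  simp [prodAux]

lemma prodAux_det_isUnit {n : ℕ} (A : ℕ → Matrix (Fin n) (Fin n) ℝ) :
    ∀ d, (∀ k < d, IsUnit (A k).det) → IsUnit (prodAux A 0 d).det := by
  intro d
  induction d with
  | zero => intro _; simp [prodAux]
  | succ d ih =>
    intro h
    rw [prodAux_succ, Matrix.det_mul]
    exact (h d (Nat.lt_succ_self d)).mul (ih fun k hk => h k (Nat.lt_succ_of_lt hk))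

lemma Phi_zero {n : ℕ} (A : ℕ → Matrix (Fin n) (Fin n) ℝ) (j : ℕ) (hj : 0 < j) :
    Phi A 0 j = (prodAux A 0 j)⁻¹ := by
  rw [Phi, if_neg (by omega)]; simp

lemma rec_formula {n m N : ℕ} (A : ℕ → Matrix (Fin n) (Fin n) ℝ)
    (B : ℕ → Matrix (Fin n) (Fin m) ℝ) (hA : ∀ k < N, IsUnit (A k).det) (c : ℝ)
    (X : ℕ → Matrix (Fin n) (Fin n) ℝ)
    (hX : ∀ k < N, X (k+1) = A k * X k * (A k)ᵀ + c • (B k * (B k)ᵀ)) :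
    ∀ k ≤ N, X k = prodAux A 0 k * (X 0 + c • Gc A B k 0) * (prodAux A 0 k)ᵀ := by
  intro k
  induction k with
  | zero => intro _; simp [prodAux, Gc]
  | succ k ih =>
    intro hk
    have hkN : k < N := hk
    set M' := prodAux A 0 (k+1) with hM'def
    have hM'd : IsUnit M'.det := prodAux_det_isUnit A (k+1) (fun j hj => hA j (by omega))
    haveI := Matrix.invertibleOfIsUnitDet _ hM'd
    have hGc : Gc A B (k+1) 0 = Gc A B k 0 + M'⁻¹ * B k * (B k)ᵀ * (M'⁻¹)ᵀ := by
      rw [Gc, Finset.sum_Ico_succ_top (Nat.zero_le k), ← Gc, Phi_zero A (k+1) (Nat.succ_pos k)]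
    have e1 : A k * (prodAux A 0 k * (X 0 + c • Gc A B k 0) * (prodAux A 0 k)ᵀ) * (A k)ᵀ
        = M' * (X 0 + c • Gc A B k 0) * M'ᵀ := by
      rw [hM'def, prodAux_succ, Matrix.transpose_mul]
      simp only [Matrix.mul_assoc]
    have e3 : M' * (M'⁻¹ * B k * (B k)ᵀ * (M'⁻¹)ᵀ) * M'ᵀ = B k * (B k)ᵀ := by
      simp only [Matrix.mul_assoc, Matrix.transpose_nonsing_inv,
        Matrix.mul_inv_cancel_left_of_invertible, Matrix.inv_mul_cancel_left_of_invertible,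
        Matrix.inv_mul_of_invertible, Matrix.mul_inv_of_invertible, Matrix.mul_one, Matrix.one_mul]
    rw [hX k hkN, ih (le_of_lt hkN), e1, hGc]
    simp only [smul_add, Matrix.mul_add, Matrix.add_mul, e3]
    simp only [Matrix.mul_smul, Matrix.smul_mul, e3]
    abel

/-- The minus-branch solution of the coupled Lyapunov equations satisfies both boundary conditions. -/
theorem stmt7
    {n m N : ℕ} (hn : 0 < n) (hm : 0 < m) (hN : 0 < N)
    (ε : ℝ) (hε : 0 < ε)
    (A : ℕ → Matrix (Fin n) (Fin n) ℝ) (B : ℕ → Matrix (Fin n) (Fin m) ℝ)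
    (hA : ∀ k < N, IsUnit (A k).det)
    (Sig0 SigN : Matrix (Fin n) (Fin n) ℝ)
    (hSig0 : Sig0.PosDef) (hSigN : SigN.PosDef)
    (kr : ℕ) (hkr1 : 1 ≤ kr) (hkrN : kr ≤ N)
    (hGr1 : ∀ k, kr ≤ k → k ≤ N → IsUnit (Gr A B k 0).det)
    (hGr2 : ∀ k < kr, IsUnit (Gr A B N k).det)
    -- `R` is the positive definite square root of the controllability Gramian `G_c(N,0)`.
    (R : Matrix (Fin n) (Fin n) ℝ) (hR : R.PosDef) (hRR : R * R = Gc A B N 0)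
    (S0 SN : Matrix (Fin n) (Fin n) ℝ)
    (hS0 : S0 = ε⁻¹ • (R⁻¹ * Sig0 * R⁻¹))
    (hSN : SN = ε⁻¹ • (R⁻¹ * Phi A 0 N * SigN * (Phi A 0 N)ᵀ * R⁻¹))
    -- `U` is the positive semidefinite square root of `S₀`.
    (U : Matrix (Fin n) (Fin n) ℝ) (hU : U.PosSemidef) (hUU : U * U = S0)
    -- `T` is the positive semidefinite square root of `S₀^{1/2} S_N S₀^{1/2} + (1/4) I`.
    (T : Matrix (Fin n) (Fin n) ℝ) (hT : T.PosSemidef)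
    (hTT : T * T = U * SN * U + (1/4 : ℝ) • 1)
    -- invertibility of `F(S₀,S_N)` and `B(S₀,S_N)`
    (hF : IsUnit (S0 + (1/2 : ℝ) • 1 - T).det)
    (hB : IsUnit (-S0 + (1/2 : ℝ) • 1 + T).det)
    (Q : ℕ → Matrix (Fin n) (Fin n) ℝ)
    (hQ0 : Q 0 = R * U * (S0 + (1/2 : ℝ) • 1 - T)⁻¹ * U * R)
    (hQrec : ∀ k < N, Q (k+1) = A k * Q k * (A k)ᵀ - B k * (B k)ᵀ)
    (P : ℕ → Matrix (Fin n) (Fin n) ℝ)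
    (hP0 : P 0 = (ε • Sig0⁻¹ - (Q 0)⁻¹)⁻¹)
    (hPrec : ∀ k < N, P (k+1) = A k * P k * (A k)ᵀ + B k * (B k)ᵀ) :
    ε • Sig0⁻¹ = (P 0)⁻¹ + (Q 0)⁻¹ ∧ ε • SigN⁻¹ = (P N)⁻¹ + (Q N)⁻¹ := by
  have hεne : ε ≠ 0 := ne_of_gt hε
  set F := S0 + (1/2 : ℝ) • (1 : Matrix (Fin n) (Fin n) ℝ) - T with hFdef
  set Bm := -S0 + (1/2 : ℝ) • (1 : Matrix (Fin n) (Fin n) ℝ) + T with hBmdef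
  set M := prodAux A 0 N with hMdef
  -- determinant facts
  have hRd : IsUnit R.det := isUnit_iff_ne_zero.mpr hR.det_pos.ne'
  haveI := Matrix.invertibleOfIsUnitDet _ hRd
  have hSig0d : IsUnit Sig0.det := isUnit_iff_ne_zero.mpr hSig0.det_pos.ne'
  haveI := Matrix.invertibleOfIsUnitDet _ hSig0d
  have hSigNd : IsUnit SigN.det := isUnit_iff_ne_zero.mpr hSigN.det_pos.ne'
  haveI := Matrix.invertibleOfIsUnitDet _ hSigNd
  have hMd : IsUnit M.det := prodAux_det_isUnit A N hA
  haveI := Matrix.invertibleOfIsUnitDet _ hMd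
  have hPhi0N : Phi A 0 N = M⁻¹ := Phi_zero A N hN
  have hS0d : IsUnit S0.det := by
    rw [hS0, isUnit_iff_ne_zero]
    simp only [Matrix.det_smul, Matrix.det_mul, Matrix.det_nonsing_inv, Ring.inverse_eq_inv]
    exact mul_ne_zero (pow_ne_zero _ (inv_ne_zero hεne))
      (mul_ne_zero (mul_ne_zero (inv_ne_zero hRd.ne_zero) hSig0d.ne_zero)
        (inv_ne_zero hRd.ne_zero))
  haveI := Matrix.invertibleOfIsUnitDet _ hS0d
  have hUd : IsUnit U.det := by
    rw [isUnit_iff_ne_zero]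
    intro h
    apply hS0d.ne_zero
    rw [← hUU, Matrix.det_mul, h, zero_mul]
  haveI := Matrix.invertibleOfIsUnitDet _ hUd
  have hSNd : IsUnit SN.det := by
    rw [hSN, hPhi0N, isUnit_iff_ne_zero]
    simp only [Matrix.det_smul, Matrix.det_mul, Matrix.det_nonsing_inv, Ring.inverse_eq_inv,
      Matrix.det_transpose]
    exact mul_ne_zero (pow_ne_zero _ (inv_ne_zero hεne))
      (mul_ne_zero (mul_ne_zero (mul_ne_zero (mul_ne_zero (inv_ne_zero hRd.ne_zero)
        (inv_ne_zero hMd.ne_zero)) hSigNd.ne_zero) (inv_ne_zero hMd.ne_zero))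
        (inv_ne_zero hRd.ne_zero))
  haveI := Matrix.invertibleOfIsUnitDet _ hSNd
  haveI := Matrix.invertibleOfIsUnitDet _ hF
  haveI := Matrix.invertibleOfIsUnitDet _ hB
  -- the square-root factor identities
  have hT1 : (T - (1/2 : ℝ) • 1) * (T + (1/2 : ℝ) • 1) = U * SN * U := by
    have : (T - (1/2 : ℝ) • 1) * (T + (1/2 : ℝ) • 1) = T * T - (1/4 : ℝ) • 1 := by
      simp only [Matrix.mul_add, Matrix.sub_mul, Matrix.mul_smul, Matrix.smul_mul,
        Matrix.mul_one, Matrix.one_mul, smul_smul]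
      module
    rw [this, hTT]; module
  have hT2 : (T + (1/2 : ℝ) • 1) * (T - (1/2 : ℝ) • 1) = U * SN * U := by
    have : (T + (1/2 : ℝ) • 1) * (T - (1/2 : ℝ) • 1) = T * T - (1/4 : ℝ) • 1 := by
      simp only [Matrix.mul_sub, Matrix.add_mul, Matrix.mul_smul, Matrix.smul_mul,
        Matrix.mul_one, Matrix.one_mul, smul_smul]
      module
    rw [this, hTT]; module
  have hDd : IsUnit (U * SN * U).det := by
    rw [isUnit_iff_ne_zero]
    simp only [Matrix.det_mul]
    exact mul_ne_zero (mul_ne_zero hUd.ne_zero hSNd.ne_zero) hUd.ne_zero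
  haveI := Matrix.invertibleOfIsUnitDet _ hDd
  have hTmTp : IsUnit (T - (1/2 : ℝ) • 1 : Matrix (Fin n) (Fin n) ℝ).det ∧
      IsUnit (T + (1/2 : ℝ) • 1 : Matrix (Fin n) (Fin n) ℝ).det := by
    have h := hDd
    rw [← hT1, Matrix.det_mul] at h
    exact ⟨isUnit_of_mul_isUnit_left h, isUnit_of_mul_isUnit_right h⟩
  haveI := Matrix.invertibleOfIsUnitDet _ hTmTp.1
  haveI := Matrix.invertibleOfIsUnitDet _ hTmTp.2
  -- inverse of Q 0
  have hQ0inv : (Q 0)⁻¹ = R⁻¹ * U⁻¹ * F * U⁻¹ * R⁻¹ := by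
    apply Matrix.inv_eq_right_inv
    rw [hQ0]
    simp only [Matrix.mul_assoc, Matrix.mul_inv_cancel_left_of_invertible,
      Matrix.inv_mul_cancel_left_of_invertible, Matrix.mul_inv_of_invertible,
      Matrix.inv_mul_of_invertible, Matrix.mul_one, Matrix.one_mul]
  -- ε • Sig0⁻¹
  have hSig0e : Sig0 = ε • (R * (U * U) * R) := by
    rw [hUU, hS0, Matrix.mul_smul, Matrix.smul_mul, smul_smul, mul_inv_cancel₀ hεne, one_smul]
    simp only [Matrix.mul_assoc, Matrix.mul_inv_cancel_left_of_invertible,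
      Matrix.inv_mul_cancel_left_of_invertible, Matrix.mul_inv_of_invertible,
      Matrix.inv_mul_of_invertible, Matrix.mul_one, Matrix.one_mul]
  have hSig0inv : Sig0⁻¹ = ε⁻¹ • (R⁻¹ * U⁻¹ * U⁻¹ * R⁻¹) := by
    apply Matrix.inv_eq_right_inv
    rw [hSig0e, Matrix.smul_mul, Matrix.mul_smul, smul_smul, mul_inv_cancel₀ hεne, one_smul]
    simp only [Matrix.mul_assoc, Matrix.mul_inv_cancel_left_of_invertible,
      Matrix.inv_mul_cancel_left_of_invertible, Matrix.mul_inv_of_invertible,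
      Matrix.inv_mul_of_invertible, Matrix.mul_one, Matrix.one_mul]
  have hεSig0 : ε • Sig0⁻¹ = R⁻¹ * U⁻¹ * U⁻¹ * R⁻¹ := by
    rw [hSig0inv, smul_smul, mul_inv_cancel₀ hεne, one_smul]
  -- P 0
  have h1F : (1 : Matrix (Fin n) (Fin n) ℝ) - F = Bm := by rw [hFdef, hBmdef]; module
  have hdiff : ε • Sig0⁻¹ - (Q 0)⁻¹ = R⁻¹ * U⁻¹ * Bm * U⁻¹ * R⁻¹ := by
    rw [hεSig0, hQ0inv, ← h1F]
    simp only [Matrix.mul_sub, Matrix.sub_mul, Matrix.mul_one, Matrix.one_mul, Matrix.mul_assoc]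
  have hdiffd : IsUnit (R⁻¹ * U⁻¹ * Bm * U⁻¹ * R⁻¹).det := by
    rw [isUnit_iff_ne_zero]
    simp only [Matrix.det_mul, Matrix.det_nonsing_inv, Ring.inverse_eq_inv]
    exact mul_ne_zero (mul_ne_zero (mul_ne_zero (mul_ne_zero (inv_ne_zero hRd.ne_zero)
      (inv_ne_zero hUd.ne_zero)) hB.ne_zero) (inv_ne_zero hUd.ne_zero))
      (inv_ne_zero hRd.ne_zero)
  have hP0inv : (P 0)⁻¹ = R⁻¹ * U⁻¹ * Bm * U⁻¹ * R⁻¹ := by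
    rw [hP0, hdiff, Matrix.nonsing_inv_nonsing_inv _ hdiffd]
  -- first boundary condition
  have c1 : ε • Sig0⁻¹ = (P 0)⁻¹ + (Q 0)⁻¹ := by
    rw [hP0inv, hQ0inv, hεSig0]
    have hBF : Bm + F = (1 : Matrix (Fin n) (Fin n) ℝ) := by rw [hFdef, hBmdef]; module
    have expand : R⁻¹ * U⁻¹ * (Bm + F) * U⁻¹ * R⁻¹
        = R⁻¹ * U⁻¹ * Bm * U⁻¹ * R⁻¹ + R⁻¹ * U⁻¹ * F * U⁻¹ * R⁻¹ := by
      simp only [Matrix.mul_add, Matrix.add_mul]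
    rw [← expand, hBF, Matrix.mul_one]
  refine ⟨c1, ?_⟩
  -- X and Y
  set Tm := T - (1/2 : ℝ) • (1 : Matrix (Fin n) (Fin n) ℝ) with hTmdef
  set Tp := T + (1/2 : ℝ) • (1 : Matrix (Fin n) (Fin n) ℝ) with hTpdef
  set X := U * F⁻¹ * Tm * U⁻¹ with hXdef
  set Y := U * Bm⁻¹ * Tp * U⁻¹ with hYdef
  have hXd : IsUnit X.det := by
    rw [hXdef, isUnit_iff_ne_zero]
    simp only [Matrix.det_mul, Matrix.det_nonsing_inv, Ring.inverse_eq_inv]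
    exact mul_ne_zero (mul_ne_zero (mul_ne_zero hUd.ne_zero (inv_ne_zero hF.ne_zero))
      hTmTp.1.ne_zero) (inv_ne_zero hUd.ne_zero)
  haveI := Matrix.invertibleOfIsUnitDet _ hXd
  have hYd : IsUnit Y.det := by
    rw [hYdef, isUnit_iff_ne_zero]
    simp only [Matrix.det_mul, Matrix.det_nonsing_inv, Ring.inverse_eq_inv]
    exact mul_ne_zero (mul_ne_zero (mul_ne_zero hUd.ne_zero (inv_ne_zero hB.ne_zero))
      hTmTp.2.ne_zero) (inv_ne_zero hUd.ne_zero)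
  haveI := Matrix.invertibleOfIsUnitDet _ hYd
  have hX1 : U * F⁻¹ * U - 1 = X := by
    have hTm : Tm = U * U - F := by rw [hTmdef, hFdef, hUU]; module
    rw [hXdef, hTm]
    simp only [Matrix.mul_sub, Matrix.sub_mul, Matrix.mul_assoc,
      Matrix.mul_inv_cancel_left_of_invertible, Matrix.inv_mul_cancel_left_of_invertible,
      Matrix.mul_inv_of_invertible, Matrix.inv_mul_of_invertible, Matrix.mul_one, Matrix.one_mul]
  have hY1 : U * Bm⁻¹ * U + 1 = Y := by
    have hTp : Tp = U * U + Bm := by rw [hTpdef, hBmdef, hUU]; module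
    rw [hYdef, hTp]
    simp only [Matrix.mul_add, Matrix.add_mul, Matrix.mul_assoc,
      Matrix.mul_inv_cancel_left_of_invertible, Matrix.inv_mul_cancel_left_of_invertible,
      Matrix.mul_inv_of_invertible, Matrix.inv_mul_of_invertible, Matrix.mul_one, Matrix.one_mul]
  -- Q N and P N
  have hQN : Q N = M * (R * X * R) * Mᵀ := by
    have hrec := rec_formula A B hA (-1 : ℝ) Q
      (fun k hk => by rw [hQrec k hk]; module) N le_rfl
    rw [hrec]
    congr 1
    congr 1
    rw [hQ0, ← hRR, ← hX1]
    simp only [neg_smul, one_smul, Matrix.mul_sub, Matrix.sub_mul, Matrix.mul_one,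
      Matrix.one_mul, Matrix.mul_assoc]
    abel
  have hPN : P N = M * (R * Y * R) * Mᵀ := by
    have hrec := rec_formula A B hA (1 : ℝ) P
      (fun k hk => by rw [hPrec k hk, one_smul]) N le_rfl
    rw [hrec]
    congr 1
    congr 1
    have hP0e : P 0 = R * U * Bm⁻¹ * U * R := by
      rw [hP0, hdiff]
      apply Matrix.inv_eq_right_inv
      simp only [Matrix.mul_assoc, Matrix.mul_inv_cancel_left_of_invertible,
        Matrix.inv_mul_cancel_left_of_invertible, Matrix.mul_inv_of_invertible,
        Matrix.inv_mul_of_invertible, Matrix.mul_one, Matrix.one_mul]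
    rw [hP0e, ← hRR, one_smul, ← hY1]
    simp only [Matrix.mul_add, Matrix.add_mul, Matrix.mul_one, Matrix.one_mul, Matrix.mul_assoc]
  have hQNinv : (Q N)⁻¹ = (Mᵀ)⁻¹ * R⁻¹ * X⁻¹ * R⁻¹ * M⁻¹ := by
    rw [hQN]
    apply Matrix.inv_eq_right_inv
    simp only [Matrix.mul_assoc, Matrix.mul_inv_cancel_left_of_invertible,
      Matrix.inv_mul_cancel_left_of_invertible, Matrix.mul_inv_of_invertible,
      Matrix.inv_mul_of_invertible, Matrix.mul_one, Matrix.one_mul]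
  have hPNinv : (P N)⁻¹ = (Mᵀ)⁻¹ * R⁻¹ * Y⁻¹ * R⁻¹ * M⁻¹ := by
    rw [hPN]
    apply Matrix.inv_eq_right_inv
    simp only [Matrix.mul_assoc, Matrix.mul_inv_cancel_left_of_invertible,
      Matrix.inv_mul_cancel_left_of_invertible, Matrix.mul_inv_of_invertible,
      Matrix.inv_mul_of_invertible, Matrix.mul_one, Matrix.one_mul]
  -- the key identity X⁻¹ + Y⁻¹ = SN⁻¹
  have hXinv : X⁻¹ = U * ((U * SN * U)⁻¹ * Tp) * F * U⁻¹ := by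
    have hTminv : Tm⁻¹ = (U * SN * U)⁻¹ * Tp := by
      apply Matrix.inv_eq_left_inv
      rw [Matrix.mul_assoc, hT2, Matrix.inv_mul_of_invertible]
    rw [hXdef]
    apply Matrix.inv_eq_right_inv
    rw [← hTminv]
    simp only [Matrix.mul_assoc, Matrix.mul_inv_cancel_left_of_invertible,
      Matrix.inv_mul_cancel_left_of_invertible, Matrix.mul_inv_of_invertible,
      Matrix.inv_mul_of_invertible, Matrix.mul_one, Matrix.one_mul]
  have hYinv : Y⁻¹ = U * ((U * SN * U)⁻¹ * Tm) * Bm * U⁻¹ := by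
    have hTpinv : Tp⁻¹ = (U * SN * U)⁻¹ * Tm := by
      apply Matrix.inv_eq_left_inv
      rw [Matrix.mul_assoc, hT1, Matrix.inv_mul_of_invertible]
    rw [hYdef]
    apply Matrix.inv_eq_right_inv
    rw [← hTpinv]
    simp only [Matrix.mul_assoc, Matrix.mul_inv_cancel_left_of_invertible,
      Matrix.inv_mul_cancel_left_of_invertible, Matrix.mul_inv_of_invertible,
      Matrix.inv_mul_of_invertible, Matrix.mul_one, Matrix.one_mul]
  have key : X⁻¹ + Y⁻¹ = SN⁻¹ := by
    rw [hXinv, hYinv]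
    have hsum : Tp * F + Tm * Bm = U * U := by
      rw [hTpdef, hTmdef, hFdef, hBmdef, hUU]
      simp only [Matrix.mul_add, Matrix.mul_sub, Matrix.add_mul, Matrix.sub_mul,
        Matrix.mul_smul, Matrix.smul_mul, Matrix.mul_one, Matrix.one_mul, smul_smul,
        Matrix.mul_neg, Matrix.neg_mul, smul_neg, neg_sub]
      module
    have e1 : U * (U * SN * U)⁻¹ * (Tp * F + Tm * Bm) * U⁻¹
        = U * ((U * SN * U)⁻¹ * Tp) * F * U⁻¹ + U * ((U * SN * U)⁻¹ * Tm) * Bm * U⁻¹ := by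
      simp only [Matrix.mul_add, Matrix.add_mul, Matrix.mul_assoc]
    have hDinv : (U * SN * U)⁻¹ = U⁻¹ * SN⁻¹ * U⁻¹ := by
      apply Matrix.inv_eq_right_inv
      simp only [Matrix.mul_assoc, Matrix.mul_inv_cancel_left_of_invertible,
        Matrix.inv_mul_cancel_left_of_invertible, Matrix.mul_inv_of_invertible,
        Matrix.inv_mul_of_invertible, Matrix.mul_one, Matrix.one_mul]
    rw [← e1, hsum, hDinv]
    simp only [Matrix.mul_assoc, Matrix.mul_inv_cancel_left_of_invertible,
      Matrix.inv_mul_cancel_left_of_invertible, Matrix.mul_inv_of_invertible,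
      Matrix.inv_mul_of_invertible, Matrix.mul_one, Matrix.one_mul]
  -- ε • SigN⁻¹
  have hSigNe : SigN = ε • (M * R * SN * R * Mᵀ) := by
    rw [hSN, hPhi0N]
    simp only [Matrix.mul_smul, Matrix.smul_mul, smul_smul, mul_inv_cancel₀ hεne, one_smul]
    simp only [Matrix.transpose_nonsing_inv, Matrix.mul_assoc,
      Matrix.mul_inv_cancel_left_of_invertible, Matrix.inv_mul_cancel_left_of_invertible,
      Matrix.mul_inv_of_invertible, Matrix.inv_mul_of_invertible, Matrix.mul_one, Matrix.one_mul]
  have hSigNinv : SigN⁻¹ = ε⁻¹ • ((Mᵀ)⁻¹ * R⁻¹ * SN⁻¹ * R⁻¹ * M⁻¹) := by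
    apply Matrix.inv_eq_right_inv
    rw [hSigNe, Matrix.smul_mul, Matrix.mul_smul, smul_smul, mul_inv_cancel₀ hεne, one_smul]
    simp only [Matrix.mul_assoc, Matrix.mul_inv_cancel_left_of_invertible,
      Matrix.inv_mul_cancel_left_of_invertible, Matrix.mul_inv_of_invertible,
      Matrix.inv_mul_of_invertible, Matrix.mul_one, Matrix.one_mul]
  rw [hSigNinv, smul_smul, mul_inv_cancel₀ hεne, one_smul, hPNinv, hQNinv, ← key]
  simp only [Matrix.mul_add, Matrix.add_mul]
  abel
end
end

section
/- Recursion for the conditional (pinned) covariance (core of Proposition 4): with P_k defined by P₀ = 0 and P_{k+1} = A_kP_kA_kᵀ + B_kB_kᵀ, P_N invertible, P̃_k := P_k − P_kΦ(N,k)ᵀP_N⁻¹Φ(N,k)P_k, and Â_k := (I − B_kB_kᵀΦ(N,k+1)ᵀG_r(N,k)†Φ(N,k+1))A_k, where G_r(N,k)† is the Moore–Penrose inverse of G_r(N,k), it holds for every k ∈ {0,…,N−1} that P̃_{k+1} = Â_kP̃_kÂ_kᵀ + B_kB_kᵀ − B_kB_kᵀΦ(N,k+1)ᵀG_r(N,k)†Φ(N,k+1)B_kB_kᵀ.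 -/
open Matrix

noncomputable section

/-- `H` is the Moore–Penrose inverse of `G`. -/
def IsMoorePenrose {n : ℕ} (G H : Matrix (Fin n) (Fin n) ℝ) : Prop :=
  G * H * G = G ∧ H * G * H = H ∧ (G * H)ᵀ = G * H ∧ (H * G)ᵀ = H * G

lemma prodAux_succ_right {n : ℕ} (A : ℕ → Matrix (Fin n) (Fin n) ℝ) (k : ℕ) :
    ∀ d, prodAux A k (d+1) = prodAux A (k+1) d * A k
  | 0 => by simp [prodAux]
  | d+1 => by
    show A (k + (d+1)) * prodAux A k (d+1) = (A (k+1+d) * prodAux A (k+1) d) * A k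
    rw [prodAux_succ_right A k d, show k + (d+1) = k+1+d by omega, mul_assoc]

lemma Phi_self {n : ℕ} (A : ℕ → Matrix (Fin n) (Fin n) ℝ) (N : ℕ) : Phi A N N = 1 := by
  simp [Phi, prodAux]

lemma Phi_step {n : ℕ} (A : ℕ → Matrix (Fin n) (Fin n) ℝ) {k N : ℕ} (hk : k < N) :
    Phi A N k = Phi A N (k+1) * A k := by
  rw [Phi, Phi, if_pos hk.le, if_pos (show k+1 ≤ N from hk),
    show N - k = (N - (k+1)) + 1 by omega, prodAux_succ_right]

lemma Gr_self {n m : ℕ} (A : ℕ → Matrix (Fin n) (Fin n) ℝ)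
    (B : ℕ → Matrix (Fin n) (Fin m) ℝ) (N : ℕ) : Gr A B N N = 0 := by
  simp [Gr]

lemma Gr_step {n m : ℕ} (A : ℕ → Matrix (Fin n) (Fin n) ℝ)
    (B : ℕ → Matrix (Fin n) (Fin m) ℝ) {k N : ℕ} (hk : k < N) :
    Gr A B N k = Phi A N (k+1) * B k * (B k)ᵀ * (Phi A N (k+1))ᵀ + Gr A B N (k+1) :=
  Finset.sum_eq_sum_Ico_succ_bot hk _

lemma Gr_transpose {n m : ℕ} (A : ℕ → Matrix (Fin n) (Fin n) ℝ)
    (B : ℕ → Matrix (Fin n) (Fin m) ℝ) (N k : ℕ) : (Gr A B N k)ᵀ = Gr A B N k := by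
  rw [Gr, Matrix.transpose_sum]
  refine Finset.sum_congr rfl fun j _ => ?_
  simp [Matrix.transpose_mul, Matrix.mul_assoc]

lemma mp_unique {n : ℕ} {G H₁ H₂ : Matrix (Fin n) (Fin n) ℝ}
    (h₁ : IsMoorePenrose G H₁) (h₂ : IsMoorePenrose G H₂) : H₁ = H₂ := by
  obtain ⟨a1, b1, c1, d1⟩ := h₁
  obtain ⟨a2, b2, c2, d2⟩ := h₂
  have e1 : G * H₂ = G * H₁ := by
    calc G * H₂ = (G * H₂)ᵀ := c2.symm
    _ = H₂ᵀ * Gᵀ := by rw [Matrix.transpose_mul]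
    _ = H₂ᵀ * (G * H₁ * G)ᵀ := by rw [a1]
    _ = H₂ᵀ * (Gᵀ * (G * H₁)ᵀ) := by rw [Matrix.transpose_mul (G * H₁) G]
    _ = (H₂ᵀ * Gᵀ) * (G * H₁) := by rw [c1]; noncomm_ring
    _ = (G * H₂)ᵀ * (G * H₁) := by rw [Matrix.transpose_mul]
    _ = (G * H₂) * (G * H₁) := by rw [c2]
    _ = (G * H₂ * G) * H₁ := by noncomm_ring
    _ = G * H₁ := by rw [a2]
  have e2 : H₂ * G = H₁ * G := by
    calc H₂ * G = (H₂ * G)ᵀ := d2.symm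
    _ = Gᵀ * H₂ᵀ := by rw [Matrix.transpose_mul]
    _ = (G * (H₁ * G))ᵀ * H₂ᵀ := by rw [← mul_assoc, a1]
    _ = ((H₁ * G)ᵀ * Gᵀ) * H₂ᵀ := by rw [Matrix.transpose_mul]
    _ = (H₁ * G) * (Gᵀ * H₂ᵀ) := by rw [d1]; noncomm_ring
    _ = (H₁ * G) * (H₂ * G)ᵀ := by rw [Matrix.transpose_mul]
    _ = (H₁ * G) * (H₂ * G) := by rw [d2]
    _ = H₁ * (G * H₂ * G) := by noncomm_ring
    _ = H₁ * G := by rw [a2]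
  calc H₁ = H₁ * G * H₁ := b1.symm
  _ = H₂ * G * H₁ := by rw [e2]
  _ = H₂ * (G * H₁) := by rw [mul_assoc]
  _ = H₂ * (G * H₂) := by rw [e1]
  _ = H₂ := by rw [← mul_assoc]; exact b2

lemma mp_symm {n : ℕ} {G H : Matrix (Fin n) (Fin n) ℝ} (hG : Gᵀ = G)
    (h : IsMoorePenrose G H) : Hᵀ = H := by
  obtain ⟨a, b, c, d⟩ := h
  refine mp_unique (G := G) ?_ ⟨a, b, c, d⟩
  refine ⟨?_, ?_, ?_, ?_⟩
  · have h1 : G * Hᵀ * G = (G * H * G)ᵀ := by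
      simp [Matrix.transpose_mul, hG, Matrix.mul_assoc]
    rw [h1, a, hG]
  · have h1 : Hᵀ * G * Hᵀ = (H * G * H)ᵀ := by
      simp [Matrix.transpose_mul, hG, Matrix.mul_assoc]
    rw [h1, b]
  · have h1 : (G * Hᵀ)ᵀ = H * G := by simp [Matrix.transpose_mul, hG]
    have h2 : G * Hᵀ = (H * G)ᵀ := by simp [Matrix.transpose_mul, hG]
    rw [h1, h2, d]
  · have h1 : (Hᵀ * G)ᵀ = G * H := by simp [Matrix.transpose_mul, hG]
    have h2 : Hᵀ * G = (G * H)ᵀ := by simp [Matrix.transpose_mul, hG]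
    rw [h1, h2, c]

lemma sum_mulVec' {n : ℕ} {ι : Type*} (s : Finset ι) (M : ι → Matrix (Fin n) (Fin n) ℝ)
    (x : Fin n → ℝ) : (∑ i ∈ s, M i) *ᵥ x = ∑ i ∈ s, (M i *ᵥ x) := by
  induction s using Finset.cons_induction with
  | empty => simp
  | cons a s ha ih => simp [Finset.sum_cons, Matrix.add_mulVec, ih]

lemma dotProduct_sum' {n : ℕ} {ι : Type*} (s : Finset ι) (x : Fin n → ℝ)
    (v : ι → Fin n → ℝ) : x ⬝ᵥ (∑ j ∈ s, v j) = ∑ j ∈ s, x ⬝ᵥ v j := by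
  induction s using Finset.cons_induction with
  | empty => simp
  | cons a s ha ih => simp [Finset.sum_cons, dotProduct_add, ih]

lemma ker_lemma {n m N k : ℕ} (A : ℕ → Matrix (Fin n) (Fin n) ℝ)
    (B : ℕ → Matrix (Fin n) (Fin m) ℝ) (hk : k < N) (x : Fin n → ℝ)
    (hx : Gr A B N k *ᵥ x = 0) : ((B k)ᵀ * (Phi A N (k+1))ᵀ) *ᵥ x = 0 := by
  have h0 : x ⬝ᵥ (Gr A B N k *ᵥ x) = 0 := by rw [hx, dotProduct_zero]
  rw [Gr, sum_mulVec', dotProduct_sum'] at h0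
  have hterm : ∀ j, x ⬝ᵥ ((Phi A N (j+1) * B j * (B j)ᵀ * (Phi A N (j+1))ᵀ) *ᵥ x)
      = (((B j)ᵀ * (Phi A N (j+1))ᵀ) *ᵥ x) ⬝ᵥ (((B j)ᵀ * (Phi A N (j+1))ᵀ) *ᵥ x) := by
    intro j
    have hre : Phi A N (j+1) * B j * (B j)ᵀ * (Phi A N (j+1))ᵀ
        = (Phi A N (j+1) * B j) * ((B j)ᵀ * (Phi A N (j+1))ᵀ) := by
      rw [Matrix.mul_assoc]
    rw [hre, ← Matrix.mulVec_mulVec, Matrix.dotProduct_mulVec, ← Matrix.mulVec_transpose,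
      Matrix.transpose_mul]
  have hnn : ∀ j ∈ Finset.Ico k N,
      0 ≤ x ⬝ᵥ ((Phi A N (j+1) * B j * (B j)ᵀ * (Phi A N (j+1))ᵀ) *ᵥ x) := by
    intro j _
    rw [hterm j]
    exact Finset.sum_nonneg fun i _ => mul_self_nonneg _
  have hz := (Finset.sum_eq_zero_iff_of_nonneg hnn).mp h0 k
      (Finset.mem_Ico.mpr ⟨le_refl k, hk⟩)
  rw [hterm k] at hz
  exact dotProduct_self_eq_zero.mp hz

lemma key_cancel {n m N k : ℕ} (A : ℕ → Matrix (Fin n) (Fin n) ℝ)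
    (B : ℕ → Matrix (Fin n) (Fin m) ℝ) (hk : k < N) {H : Matrix (Fin n) (Fin n) ℝ}
    (hmp : IsMoorePenrose (Gr A B N k) H) :
    B k * (B k)ᵀ * (Phi A N (k+1))ᵀ * H * Gr A B N k
      = B k * (B k)ᵀ * (Phi A N (k+1))ᵀ := by
  obtain ⟨a, b, c, d⟩ := hmp
  set G := Gr A B N k with hG
  set F := Phi A N (k+1) with hF
  have hGM : G * (1 - H * G) = 0 := by
    rw [mul_sub, mul_one, ← mul_assoc, a, sub_self]
  have hM : ((B k)ᵀ * Fᵀ) * (1 - H * G) = 0 := by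
    ext i j
    have hcol : (((B k)ᵀ * Fᵀ) * (1 - H * G)) *ᵥ Pi.single j 1 = 0 := by
      rw [← Matrix.mulVec_mulVec]
      apply ker_lemma A B hk
      rw [Matrix.mulVec_mulVec, hGM, Matrix.zero_mulVec]
    have := congrFun hcol i
    simpa using this
  rw [Matrix.mul_sub, Matrix.mul_one, sub_eq_zero] at hM
  calc B k * (B k)ᵀ * Fᵀ * H * G = B k * ((B k)ᵀ * Fᵀ * (H * G)) := by
        simp only [Matrix.mul_assoc]
  _ = B k * ((B k)ᵀ * Fᵀ) := by rw [← hM]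
  _ = B k * (B k)ᵀ * Fᵀ := by rw [Matrix.mul_assoc]

lemma PN_decomp {n m N : ℕ} (A : ℕ → Matrix (Fin n) (Fin n) ℝ)
    (B : ℕ → Matrix (Fin n) (Fin m) ℝ) (P : ℕ → Matrix (Fin n) (Fin n) ℝ)
    (hPrec : ∀ k < N, P (k+1) = A k * P k * (A k)ᵀ + B k * (B k)ᵀ) :
    ∀ d k, k + d = N → P N = Phi A N k * P k * (Phi A N k)ᵀ + Gr A B N k := by
  intro d
  induction d with
  | zero =>
    intro k hkd
    have hkN : k = N := by omega
    subst hkN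
    rw [Phi_self, Gr_self]
    simp
  | succ d ih =>
    intro k hkd
    have hkN : k < N := by omega
    have h1 := ih (k+1) (by omega)
    rw [h1, hPrec k hkN, Phi_step A hkN, Gr_step A B hkN]
    simp only [Matrix.transpose_mul, Matrix.mul_add, Matrix.add_mul, Matrix.mul_assoc]
    abel

lemma ringMain {α : Type*} [Ring α] (R Q G S F F' H : α)
    (h1 : S * (F * R * F' + G) = 1)
    (h2 : (F * R * F' + G) * S = 1)
    (h3 : Q * F' * H * G = Q * F')
    (h4 : G * H * (F * Q) = F * Q) :
    R + Q - (R + Q) * F' * S * F * (R + Q)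
      = (1 - Q * F' * H * F) * (R - R * F' * S * F * R) * (1 - F' * H * F * Q)
        + Q - Q * F' * H * F * Q := by
  have hGS : G * S = 1 - F * R * F' * S := by
    rw [add_mul] at h2; exact eq_sub_of_add_eq' h2
  have hSG : S * G = 1 - S * (F * R * F') := by
    rw [mul_add] at h1; exact eq_sub_of_add_eq' h1
  have e1 : Q * F' * S = Q * F' * H - Q * F' * H * F * R * F' * S := by
    calc Q * F' * S = Q * F' * H * G * S := by rw [h3]
    _ = Q * F' * H * (G * S) := by noncomm_ring
    _ = Q * F' * H * (1 - F * R * F' * S) := by rw [hGS]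
    _ = Q * F' * H - Q * F' * H * F * R * F' * S := by noncomm_ring
  have e2 : S * F * Q = H * F * Q - S * F * R * (F' * H * F * Q) := by
    calc S * F * Q = S * (G * H * (F * Q)) := by rw [h4]; noncomm_ring
    _ = (S * G) * (H * (F * Q)) := by noncomm_ring
    _ = (1 - S * (F * R * F')) * (H * (F * Q)) := by rw [hSG]
    _ = H * F * Q - S * F * R * (F' * H * F * Q) := by noncomm_ring
  have d1 : Q * F' * S * F * R
      = Q * F' * H * F * R - Q * F' * H * F * (R * F' * S * F * R) := by
    calc Q * F' * S * F * R = (Q * F' * S) * (F * R) := by noncomm_ring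
    _ = (Q * F' * H - Q * F' * H * F * R * F' * S) * (F * R) := by rw [e1]
    _ = Q * F' * H * F * R - Q * F' * H * F * (R * F' * S * F * R) := by noncomm_ring
  have d2 : R * F' * S * F * Q
      = R * (F' * H * F * Q) - (R * F' * S * F * R) * (F' * H * F * Q) := by
    calc R * F' * S * F * Q = (R * F') * (S * F * Q) := by noncomm_ring
    _ = (R * F') * (H * F * Q - S * F * R * (F' * H * F * Q)) := by rw [e2]
    _ = R * (F' * H * F * Q) - (R * F' * S * F * R) * (F' * H * F * Q) := by noncomm_ring
  have d3 : Q * F' * S * F * Q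
      = Q * F' * H * F * Q - Q * F' * H * F * (R * (F' * H * F * Q))
        + Q * F' * H * F * ((R * F' * S * F * R) * (F' * H * F * Q)) := by
    calc Q * F' * S * F * Q = (Q * F' * S) * (F * Q) := by noncomm_ring
    _ = (Q * F' * H - Q * F' * H * F * R * F' * S) * (F * Q) := by rw [e1]
    _ = Q * F' * H * F * Q - Q * F' * H * F * (R * F' * S * F * Q) := by noncomm_ring
    _ = Q * F' * H * F * Q
        - Q * F' * H * F * (R * (F' * H * F * Q) - (R * F' * S * F * R) * (F' * H * F * Q)) := by
      rw [d2]
    _ = Q * F' * H * F * Q - Q * F' * H * F * (R * (F' * H * F * Q))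
        + Q * F' * H * F * ((R * F' * S * F * R) * (F' * H * F * Q)) := by noncomm_ring
  have expand : (R + Q) * F' * S * F * (R + Q)
      = R * F' * S * F * R + R * F' * S * F * Q + Q * F' * S * F * R
        + Q * F' * S * F * Q := by noncomm_ring
  rw [expand, d1, d2, d3]
  noncomm_ring

/-- Recursion for the conditional (pinned) covariance. -/
theorem stmt10 {n m N : ℕ} (hn : 0 < n) (hm : 0 < m) (hN : 0 < N)
    (A : ℕ → Matrix (Fin n) (Fin n) ℝ) (B : ℕ → Matrix (Fin n) (Fin m) ℝ)
    (hA : ∀ k < N, IsUnit (A k).det)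
    (P : ℕ → Matrix (Fin n) (Fin n) ℝ)
    (hP0 : P 0 = 0)
    (hPrec : ∀ k < N, P (k+1) = A k * P k * (A k)ᵀ + B k * (B k)ᵀ)
    (hPN : IsUnit (P N).det)
    -- `Gd k` is the Moore–Penrose inverse of `G_r(N,k)`
    (Gd : ℕ → Matrix (Fin n) (Fin n) ℝ)
    (hGd : ∀ k < N, IsMoorePenrose (Gr A B N k) (Gd k))
    (Ptil : ℕ → Matrix (Fin n) (Fin n) ℝ)
    (hPtil : ∀ k, Ptil k = P k - P k * (Phi A N k)ᵀ * (P N)⁻¹ * Phi A N k * P k)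
    (Ahat : ℕ → Matrix (Fin n) (Fin n) ℝ)
    (hAhat : ∀ k, Ahat k =
      ((1 : Matrix (Fin n) (Fin n) ℝ)
        - B k * (B k)ᵀ * (Phi A N (k+1))ᵀ * Gd k * Phi A N (k+1)) * A k) :
    ∀ k < N,
      Ptil (k+1) = Ahat k * Ptil k * (Ahat k)ᵀ + B k * (B k)ᵀ
        - B k * (B k)ᵀ * (Phi A N (k+1))ᵀ * Gd k * Phi A N (k+1) * B k * (B k)ᵀ := by
  intro k hk
  have hmp := hGd k hk
  have hGsym : (Gr A B N k)ᵀ = Gr A B N k := Gr_transpose A B N k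
  have hHsym : (Gd k)ᵀ = Gd k := mp_symm hGsym hmp
  have hkey3 : B k * (B k)ᵀ * (Phi A N (k+1))ᵀ * Gd k * Gr A B N k
      = B k * (B k)ᵀ * (Phi A N (k+1))ᵀ := key_cancel A B hk hmp
  have hkey4 : Gr A B N k * Gd k * (Phi A N (k+1) * (B k * (B k)ᵀ))
      = Phi A N (k+1) * (B k * (B k)ᵀ) := by
    have h := congrArg Matrix.transpose hkey3
    simpa [Matrix.transpose_mul, Matrix.mul_assoc, hGsym, hHsym] using h
  have hdecomp : P N = Phi A N (k+1) * (A k * P k * (A k)ᵀ) * (Phi A N (k+1))ᵀ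
      + Gr A B N k := by
    have h := PN_decomp A B P hPrec (N - k) k (by omega)
    rw [Phi_step A hk] at h
    rw [h]
    simp only [Matrix.transpose_mul, Matrix.mul_assoc]
  have hS1 : (P N)⁻¹ * (Phi A N (k+1) * (A k * P k * (A k)ᵀ) * (Phi A N (k+1))ᵀ
      + Gr A B N k) = 1 := by
    rw [← hdecomp]; exact Matrix.nonsing_inv_mul _ hPN
  have hS2 : (Phi A N (k+1) * (A k * P k * (A k)ᵀ) * (Phi A N (k+1))ᵀ
      + Gr A B N k) * (P N)⁻¹ = 1 := by
    rw [← hdecomp]; exact Matrix.mul_nonsing_inv _ hPN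
  have main := ringMain (A k * P k * (A k)ᵀ) (B k * (B k)ᵀ) (Gr A B N k)
    ((P N)⁻¹) (Phi A N (k+1)) ((Phi A N (k+1))ᵀ) (Gd k) hS1 hS2 hkey3 hkey4
  rw [hPtil (k+1), hPtil k, hAhat k, hPrec k hk, Phi_step A hk,
    show B k * (B k)ᵀ * (Phi A N (k+1))ᵀ * Gd k * Phi A N (k+1) * B k * (B k)ᵀ
      = B k * (B k)ᵀ * (Phi A N (k+1))ᵀ * Gd k * Phi A N (k+1) * (B k * (B k)ᵀ)
      from Matrix.mul_assoc _ _ _]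
  rw [main]
  simp only [Matrix.transpose_mul, Matrix.transpose_sub, Matrix.transpose_one,
    Matrix.transpose_transpose, hHsym]
  noncomm_ring

end
end

section
/- Recursion for the conditional (pinned) mean (core of Theorem 2): with P_k defined by P₀ = 0 and P_{k+1} = A_kP_kA_kᵀ + B_kB_kᵀ, P_N invertible, for any x̄₀, x̄_N ∈ ℝ^n define ℓ_k := Φ(k,0)x̄₀ + P_kΦ(N,k)ᵀP_N⁻¹(x̄_N − Φ(N,0)x̄₀), and let Â_k := (I − B_kB_kᵀΦ(N,k+1)ᵀG_r(N,k)†Φ(N,k+1))A_k, where G_r(N,k)† is the Moore–Penrose inverse of G_r(N,k). Then for every k ∈ {0,…,N−1}: ℓ_{k+1} = Â_kℓ_k + B_kB_kᵀΦ(N,k+1)ᵀG_r(N,k)†x̄_N. -/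
open Matrix

noncomputable section

/-!
Write `F = Φ(N,k+1)` and `M = B_k B_kᵀ Fᵀ G_r(N,k)†`. Splitting off the first summand,
`G_r(N,k) = (F B_k)(F B_k)ᵀ + G_r(N,k+1)` with a positive semidefinite remainder, so the range of
`F B_k` lies in that of `G_r(N,k)` and `M G_r(N,k) = B_k B_kᵀ Fᵀ`. Combined with the identity
`Φ(N,k) P_k Φ(N,k)ᵀ + G_r(N,k) = P_N` this gives `Â_k P_k Φ(N,k)ᵀ = P_{k+1} Fᵀ - M P_N`, while
`Â_k Φ(k,0) + M Φ(N,0) = Φ(k+1,0)` holds for every `M`. The recursion for `ℓ` is these two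
identities applied to `x̄₀` and to `x̄_N - Φ(N,0) x̄₀`.
-/

section Transition

variable {n : ℕ} (A : ℕ → Matrix (Fin n) (Fin n) ℝ)

lemma Phi_of_le {k l : ℕ} (h : l ≤ k) : Phi A k l = prodAux A l (k - l) := if_pos h

@[simp]
lemma Phi_self_s12 (k : ℕ) : Phi A k k = 1 := by
  rw [Phi_of_le A le_rfl, Nat.sub_self, prodAux]

lemma Phi_succ_left {k l : ℕ} (h : l ≤ k) : Phi A (k + 1) l = A k * Phi A k l := by
  rw [Phi_of_le A (h.trans k.le_succ), Phi_of_le A h, Nat.succ_sub h, prodAux,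
    Nat.add_sub_cancel' h]

lemma Phi_mul_Phi {l j k : ℕ} (hlj : l ≤ j) (hjk : j ≤ k) :
    Phi A k j * Phi A j l = Phi A k l := by
  induction k, hjk using Nat.le_induction with
  | base => rw [Phi_self_s12, Matrix.one_mul]
  | succ k hjk ih =>
    rw [Phi_succ_left A hjk, Phi_succ_left A (hlj.trans hjk), Matrix.mul_assoc, ih]

lemma Phi_succ_right {k N : ℕ} (hk : k < N) : Phi A N k = Phi A N (k + 1) * A k := by
  rw [← Phi_mul_Phi A k.le_succ hk, Phi_succ_left A le_rfl, Phi_self_s12, Matrix.mul_one]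

end Transition

section Gramian

variable {n m : ℕ} (A : ℕ → Matrix (Fin n) (Fin n) ℝ) (B : ℕ → Matrix (Fin n) (Fin m) ℝ)

lemma Gr_eq_add_Gr_succ {N k : ℕ} (hk : k < N) :
    Gr A B N k = Phi A N (k + 1) * B k * (Phi A N (k + 1) * B k)ᵀ + Gr A B N (k + 1) := by
  rw [Gr, Finset.sum_eq_sum_Ico_succ_bot hk, transpose_mul, Gr]
  simp only [Matrix.mul_assoc]

lemma Gr_posSemidef (N k : ℕ) : (Gr A B N k).PosSemidef := by
  refine Matrix.posSemidef_sum _ fun j _ => ?_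
  simpa [Matrix.mul_assoc, conjTranspose_eq_transpose_of_trivial] using
    posSemidef_self_mul_conjTranspose (Phi A N (j + 1) * B j)

lemma Phi_mul_mul_transpose_add_Gr {N : ℕ} (P : ℕ → Matrix (Fin n) (Fin n) ℝ)
    (hPrec : ∀ k < N, P (k + 1) = A k * P k * (A k)ᵀ + B k * (B k)ᵀ) {k : ℕ} (hk : k ≤ N) :
    Phi A N k * P k * (Phi A N k)ᵀ + Gr A B N k = P N := by
  induction hk using Nat.decreasingInduction with
  | self => simp [Gr]
  | of_succ k hk ih =>
    rw [← ih, hPrec k hk, Gr_eq_add_Gr_succ A B hk, Phi_succ_right A hk]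
    simp only [transpose_mul, Matrix.mul_add, Matrix.add_mul, Matrix.mul_assoc]
    abel

end Gramian

section GeneralizedInverse

variable {ι κ ν : Type*} [Fintype ι] [Fintype κ] [Fintype ν]

lemma transpose_mul_eq_zero_of_mul_eq_zero {X : Matrix ι κ ℝ} {R : Matrix ι ι ℝ}
    (hR : R.PosSemidef) {Q : Matrix ι ν ℝ} (hQ : (X * Xᵀ + R) * Q = 0) : Xᵀ * Q = 0 := by
  have hsum : (Xᵀ * Q)ᴴ * (Xᵀ * Q) + Qᴴ * R * Q = 0 := by
    calc _ = Qᴴ * ((X * Xᵀ + R) * Q) := by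
          simp only [conjTranspose_eq_transpose_of_trivial, transpose_mul, transpose_transpose,
            Matrix.mul_add, Matrix.add_mul, Matrix.mul_assoc]
      _ = 0 := by rw [hQ, Matrix.mul_zero]
  have htrace := congrArg trace hsum
  rw [trace_add, trace_zero] at htrace
  have hXQ := (posSemidef_conjTranspose_mul_self (Xᵀ * Q)).trace_nonneg
  have hRQ := (hR.conjTranspose_mul_mul_same Q).trace_nonneg
  exact trace_conjTranspose_mul_self_eq_zero_iff.mp (by linarith)

/-- Positivity of `R` puts the range of `X` inside the range of `G`. -/
lemma transpose_mul_mul_eq_of_mul_mul_eq [DecidableEq ι] {X : Matrix ι κ ℝ}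
    {G H R : Matrix ι ι ℝ} (hR : R.PosSemidef) (hG : G = X * Xᵀ + R) (hGHG : G * H * G = G) :
    Xᵀ * H * G = Xᵀ := by
  have hker : G * (1 - H * G) = 0 := by
    rw [Matrix.mul_sub, Matrix.mul_one, ← Matrix.mul_assoc, hGHG, sub_self]
  have := transpose_mul_eq_zero_of_mul_eq_zero hR (hG ▸ hker : (X * Xᵀ + R) * (1 - H * G) = 0)
  rwa [Matrix.mul_sub, Matrix.mul_one, ← Matrix.mul_assoc, sub_eq_zero, eq_comm] at this

end GeneralizedInverse

section PinnedMean

variable {n m N : ℕ} (A : ℕ → Matrix (Fin n) (Fin n) ℝ) (B : ℕ → Matrix (Fin n) (Fin m) ℝ)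

lemma gain_mul_Gr {k : ℕ} (hk : k < N) {H : Matrix (Fin n) (Fin n) ℝ}
    (hGHG : Gr A B N k * H * Gr A B N k = Gr A B N k) :
    B k * (B k)ᵀ * (Phi A N (k + 1))ᵀ * H * Gr A B N k = B k * (B k)ᵀ * (Phi A N (k + 1))ᵀ := by
  have := transpose_mul_mul_eq_of_mul_mul_eq (Gr_posSemidef A B N (k + 1))
    (Gr_eq_add_Gr_succ A B hk) hGHG
  rw [transpose_mul] at this
  simp only [Matrix.mul_assoc] at this ⊢
  rw [this]

lemma feedback_mul_Phi_add {k : ℕ} (hk : k < N) (M : Matrix (Fin n) (Fin n) ℝ) :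
    (1 - M * Phi A N (k + 1)) * A k * Phi A k 0 + M * Phi A N 0 = Phi A (k + 1) 0 := by
  rw [← Phi_mul_Phi A k.zero_le hk.le, Phi_succ_right A hk, Phi_succ_left A k.zero_le]
  noncomm_ring

lemma feedback_mul_gain_add {k : ℕ} (hk : k < N) (P : ℕ → Matrix (Fin n) (Fin n) ℝ)
    (hPrec : ∀ k < N, P (k + 1) = A k * P k * (A k)ᵀ + B k * (B k)ᵀ) (hPN : IsUnit (P N).det)
    {M : Matrix (Fin n) (Fin n) ℝ}
    (hM : M * Gr A B N k = B k * (B k)ᵀ * (Phi A N (k + 1))ᵀ) :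
    (1 - M * Phi A N (k + 1)) * A k * (P k * (Phi A N k)ᵀ * (P N)⁻¹) + M
      = P (k + 1) * (Phi A N (k + 1))ᵀ * (P N)⁻¹ := by
  have hgram := Phi_mul_mul_transpose_add_Gr A B P hPrec hk.le
  have : (1 - M * Phi A N (k + 1)) * A k * (P k * (Phi A N k)ᵀ)
      = P (k + 1) * (Phi A N (k + 1))ᵀ - M * P N :=
    calc _ = A k * P k * (A k)ᵀ * (Phi A N (k + 1))ᵀ - M * (Phi A N k * P k * (Phi A N k)ᵀ) := by
          rw [Phi_succ_right A hk, transpose_mul]; noncomm_ring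
      _ = (P (k + 1) - B k * (B k)ᵀ) * (Phi A N (k + 1))ᵀ - M * (P N - Gr A B N k) := by
          rw [hPrec k hk, ← hgram]; noncomm_ring
      _ = P (k + 1) * (Phi A N (k + 1))ᵀ - M * P N := by
          rw [Matrix.mul_sub M, hM]; noncomm_ring
  rw [← Matrix.mul_assoc _ _ (P N)⁻¹, this, Matrix.sub_mul, Matrix.mul_assoc M,
    Matrix.mul_nonsing_inv _ hPN, Matrix.mul_one, sub_add_cancel]

end PinnedMean

lemma mulVec_step_of_mul_add_eq {ι κ : Type*} [Fintype ι] [Fintype κ]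
    {Â M : Matrix ι ι ℝ} {Φ Φ' Ψ : Matrix ι κ ℝ} {K K' : Matrix ι ι ℝ}
    (hΦ : Â * Φ + M * Ψ = Φ') (hK : Â * K + M = K') (x₀ : κ → ℝ) (x : ι → ℝ) :
    Φ' *ᵥ x₀ + K' *ᵥ (x - Ψ *ᵥ x₀) = Â *ᵥ (Φ *ᵥ x₀ + K *ᵥ (x - Ψ *ᵥ x₀)) + M *ᵥ x := by
  subst hΦ hK
  simp only [add_mulVec, mulVec_add, mulVec_sub, ← mulVec_mulVec]
  abel

theorem stmt12_general {n m N : ℕ}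
    (A : ℕ → Matrix (Fin n) (Fin n) ℝ) (B : ℕ → Matrix (Fin n) (Fin m) ℝ)
    (P : ℕ → Matrix (Fin n) (Fin n) ℝ)
    (hPrec : ∀ k < N, P (k+1) = A k * P k * (A k)ᵀ + B k * (B k)ᵀ)
    (hPN : IsUnit (P N).det)
    -- `Gd k` is the Moore–Penrose inverse of `G_r(N,k)`
    (Gd : ℕ → Matrix (Fin n) (Fin n) ℝ)
    (hGd : ∀ k < N, IsMoorePenrose (Gr A B N k) (Gd k))
    (x0 xN : Fin n → ℝ)
    (l : ℕ → Fin n → ℝ)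
    (hl : ∀ k, l k = Phi A k 0 *ᵥ x0
      + (P k * (Phi A N k)ᵀ * (P N)⁻¹) *ᵥ (xN - Phi A N 0 *ᵥ x0))
    (Ahat : ℕ → Matrix (Fin n) (Fin n) ℝ)
    (hAhat : ∀ k, Ahat k =
      ((1 : Matrix (Fin n) (Fin n) ℝ)
        - B k * (B k)ᵀ * (Phi A N (k+1))ᵀ * Gd k * Phi A N (k+1)) * A k) :
    ∀ k < N,
      l (k+1) = Ahat k *ᵥ l k
        + (B k * (B k)ᵀ * (Phi A N (k+1))ᵀ * Gd k) *ᵥ xN := by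
  intro k hk
  have hM := gain_mul_Gr A B hk (hGd k hk).1
  rw [hl, hl, hAhat]
  exact mulVec_step_of_mul_add_eq (feedback_mul_Phi_add A hk _)
    (feedback_mul_gain_add A B hk P hPrec hPN hM) x0 xN

/-- Recursion for the conditional (pinned) mean. -/
theorem stmt12 {n m N : ℕ} (hn : 0 < n) (hm : 0 < m) (hN : 0 < N)
    (A : ℕ → Matrix (Fin n) (Fin n) ℝ) (B : ℕ → Matrix (Fin n) (Fin m) ℝ)
    (hA : ∀ k < N, IsUnit (A k).det)
    (P : ℕ → Matrix (Fin n) (Fin n) ℝ)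
    (hP0 : P 0 = 0)
    (hPrec : ∀ k < N, P (k+1) = A k * P k * (A k)ᵀ + B k * (B k)ᵀ)
    (hPN : IsUnit (P N).det)
    -- `Gd k` is the Moore–Penrose inverse of `G_r(N,k)`
    (Gd : ℕ → Matrix (Fin n) (Fin n) ℝ)
    (hGd : ∀ k < N, IsMoorePenrose (Gr A B N k) (Gd k))
    (x0 xN : Fin n → ℝ)
    (l : ℕ → Fin n → ℝ)
    (hl : ∀ k, l k = Phi A k 0 *ᵥ x0
      + (P k * (Phi A N k)ᵀ * (P N)⁻¹) *ᵥ (xN - Phi A N 0 *ᵥ x0))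
    (Ahat : ℕ → Matrix (Fin n) (Fin n) ℝ)
    (hAhat : ∀ k, Ahat k =
      ((1 : Matrix (Fin n) (Fin n) ℝ)
        - B k * (B k)ᵀ * (Phi A N (k+1))ᵀ * Gd k * Phi A N (k+1)) * A k) :
    ∀ k < N,
      l (k+1) = Ahat k *ᵥ l k
        + (B k * (B k)ᵀ * (Phi A N (k+1))ᵀ * Gd k) *ᵥ xN :=
  stmt12_general A B P hPrec hPN Gd hGd x0 xN l hl Ahat hAhat
end
end
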